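/- arXiv:0904.4527 — 7 statements merged into one kernel-verified Lean document; each statement's English description precedes it below -/
import Mathlib

section
/- Let Θ ⊂ ℝ^k be compact, (p_n) probability densities on Θ, f : Θ → ℝ bounded continuous nonnegative with f_max = sup f, and L : Θ → ℝ a bounded nonnegative measurable function satisfying c := lim_{δ→0} inf_{θ ∈ Θ_δ} L(θ) > 0, where Θ_δ = {θ : f(θ) ≥ f_max − δ}. If E_n(f) → f_max, then the ratio E_n(L·f)/E_n(L) = (∫_Θ f L p_n dθ)/(∫_Θ L p_n dθ) converges to f_max as n → ∞. -/
/-!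
View `E_n` as expectation under the probability measure `ν_n = p_n · vol|_Θ` and put
`ε_n = f_max - E_n(f) → 0`. Pointwise `(f_max - f) L ≤ M (f_max - f)` with `M = sup L`, so
`|E_n(L f) - f_max E_n(L)| ≤ M ε_n`. If `δ > 0` is such that `L ≥ c/2` on `Θ_δ`, then
`L ≥ c/2 - (c / 2δ) (f_max - f)` everywhere, so `E_n(L) ≥ c/2 - (c / 2δ) ε_n` stays away from `0`
and the ratio tends to `f_max`.
-/

open MeasureTheory Set Filter Topology

theorem tendsto_div_of_abs_sub_mul_le {ι : Type*} {l : Filter ι} {N D ε : ι → ℝ} {a b : ℝ}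
    (hb : 0 < b) (hD : ∀ᶠ i in l, b ≤ D i) (hε : Tendsto ε l (𝓝 0))
    (hN : ∀ᶠ i in l, |N i - a * D i| ≤ ε i) :
    Tendsto (fun i => N i / D i) l (𝓝 a) := by
  have hdiff : Tendsto (fun i => N i / D i - a) l (𝓝 0) := by
    refine squeeze_zero_norm' ?_ (by simpa using hε.div_const b)
    filter_upwards [hD, hN] with i hDi hNi
    have hDpos : 0 < D i := hb.trans_le hDi
    rw [Real.norm_eq_abs, div_sub' hDpos.ne', abs_div, abs_of_pos hDpos, mul_comm]
    calc |N i - a * D i| / D i ≤ ε i / D i := by gcongr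
      _ ≤ ε i / b := div_le_div_of_nonneg_left ((abs_nonneg _).trans hNi) hb hDi
  simpa using hdiff.add_const a

theorem exists_pos_forall_le_of_tendsto_sInf {α : Type*} {Θ : Set α} {f L : α → ℝ}
    {fmax b c : ℝ} (hL0 : ∀ θ ∈ Θ, 0 ≤ L θ)
    (hclim : Tendsto (fun δ => sInf (L '' {θ ∈ Θ | fmax - δ ≤ f θ})) (𝓝[>] 0) (𝓝 c))
    (hbc : b < c) :
    ∃ δ > 0, ∀ θ ∈ Θ, fmax - δ ≤ f θ → b ≤ L θ := by
  obtain ⟨δ, hδb, hδ⟩ :=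
    ((hclim.eventually (eventually_gt_nhds hbc)).and self_mem_nhdsWithin).exists
  refine ⟨δ, hδ, fun θ hθ hfθ => hδb.le.trans (csInf_le ?_ ⟨θ, ⟨hθ, hfθ⟩, rfl⟩)⟩
  exact ⟨0, by rintro _ ⟨z, hz, rfl⟩; exact hL0 z hz.1⟩

theorem integrable_of_nonneg_of_le {α : Type*} [MeasurableSpace α] {μ : Measure α}
    [IsFiniteMeasure μ] {g : α → ℝ} {C : ℝ} (hg : AEStronglyMeasurable g μ)
    (hg0 : ∀ᵐ x ∂μ, 0 ≤ g x) (hgC : ∀ᵐ x ∂μ, g x ≤ C) : Integrable g μ :=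
  .of_bound hg C <| by
    filter_upwards [hg0, hgC] with x h0 hC
    rwa [Real.norm_eq_abs, abs_of_nonneg h0]

section ProbabilityMeasure

variable {α : Type*} [MeasurableSpace α] {ν : Measure α} [IsProbabilityMeasure ν]
  {f L : α → ℝ} {a : ℝ}

theorem integral_const_mul_sub {M : ℝ} (hf : Integrable f ν) :
    ∫ x, M * (a - f x) ∂ν = M * (a - ∫ x, f x ∂ν) := by
  rw [integral_const_mul, integral_sub (integrable_const a) hf, integral_const, probReal_univ,
    one_smul]

theorem sub_mul_le_integral_of_le_on_superlevel {b δ : ℝ} (hb : 0 ≤ b) (hδ : 0 < δ)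
    (hf : Integrable f ν) (hL : Integrable L ν) (hfa : ∀ᵐ x ∂ν, f x ≤ a)
    (hL0 : ∀ᵐ x ∂ν, 0 ≤ L x) (hLb : ∀ᵐ x ∂ν, a - δ ≤ f x → b ≤ L x) :
    b - b / δ * (a - ∫ x, f x ∂ν) ≤ ∫ x, L x ∂ν := by
  have hpt : ∀ᵐ x ∂ν, b - b / δ * (a - f x) ≤ L x := by
    filter_upwards [hfa, hL0, hLb] with x hfx hLx hLbx
    rcases le_or_gt (a - δ) (f x) with hnear | hfar
    · have : 0 ≤ b / δ * (a - f x) := by have := sub_nonneg.2 hfx; positivity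
      linarith [hLbx hnear]
    · have : b ≤ b / δ * (a - f x) := by
        rw [div_mul_eq_mul_div, le_div_iff₀ hδ]
        exact mul_le_mul_of_nonneg_left (by linarith) hb
      linarith
  have hg : Integrable (fun x => b / δ * (a - f x)) ν :=
    ((integrable_const a).sub hf).const_mul _
  calc b - b / δ * (a - ∫ x, f x ∂ν)
      = ∫ x, (b - b / δ * (a - f x)) ∂ν := by
        rw [integral_sub (integrable_const b) hg, integral_const_mul_sub hf, integral_const,
          probReal_univ, one_smul]
    _ ≤ ∫ x, L x ∂ν := integral_mono_ae ((integrable_const b).sub hg) hL hpt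

theorem abs_integral_mul_sub_mul_integral_le {M : ℝ} (hf : Integrable f ν)
    (hLm : AEStronglyMeasurable L ν) (hfa : ∀ᵐ x ∂ν, f x ≤ a) (hL0 : ∀ᵐ x ∂ν, 0 ≤ L x)
    (hLM : ∀ᵐ x ∂ν, L x ≤ M) :
    |∫ x, f x * L x ∂ν - a * ∫ x, L x ∂ν| ≤ M * (a - ∫ x, f x ∂ν) := by
  have hLbd : ∀ᵐ x ∂ν, ‖L x‖ ≤ M := by
    filter_upwards [hL0, hLM] with x h0 hM
    rwa [Real.norm_eq_abs, abs_of_nonneg h0]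
  have hL : Integrable L ν := .of_bound hLm M hLbd
  have hpt : ∀ᵐ x ∂ν, ‖f x * L x - a * L x‖ ≤ M * (a - f x) := by
    filter_upwards [hfa, hL0, hLM] with x hfx h0 hM
    rw [Real.norm_eq_abs, ← sub_mul, abs_mul, abs_of_nonpos (sub_nonpos.2 hfx),
      abs_of_nonneg h0, neg_sub, mul_comm (a - f x)]
    exact mul_le_mul_of_nonneg_right hM (sub_nonneg.2 hfx)
  rw [← integral_const_mul, ← integral_sub (hf.mul_bdd hLm hLbd) (hL.const_mul a),
    ← integral_const_mul_sub hf, ← Real.norm_eq_abs]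
  exact norm_integral_le_of_norm_le (((integrable_const a).sub hf).const_mul M) hpt

end ProbabilityMeasure

section Density

variable {α : Type*} [MeasurableSpace α] {μ : Measure α} {s : Set α} {p : α → ℝ}

theorem isProbabilityMeasure_withDensity_ofReal (hp0 : ∀ x ∈ s, 0 ≤ p x)
    (hs : MeasurableSet s) (hp1 : ∫ x in s, p x ∂μ = 1) :
    IsProbabilityMeasure ((μ.restrict s).withDensity fun x => ENNReal.ofReal (p x)) := by
  constructor
  rw [withDensity_apply _ MeasurableSet.univ, Measure.restrict_univ,
    ← ofReal_integral_eq_lintegral_ofReal (.of_integral_ne_zero (by simp [hp1]))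
      ((ae_restrict_iff' hs).2 (ae_of_all _ hp0)), hp1, ENNReal.ofReal_one]

theorem integral_withDensity_ofReal_eq_setIntegral_mul (hp0 : ∀ x ∈ s, 0 ≤ p x)
    (hs : MeasurableSet s) (hpm : Measurable p) (g : α → ℝ) :
    ∫ x, g x ∂(μ.restrict s).withDensity (fun x => ENNReal.ofReal (p x)) =
      ∫ x in s, g x * p x ∂μ := by
  rw [integral_withDensity_eq_integral_toReal_smul hpm.ennreal_ofReal
    (ae_of_all _ fun _ => ENNReal.ofReal_lt_top)]
  refine setIntegral_congr_fun hs fun x hx => ?_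
  simp [ENNReal.toReal_ofReal (hp0 x hx), mul_comm]

end Density

/-- Ratio convergence at the maximum: if `E_n(f) → f_max` and the bounded nonnegative
measurable `L` satisfies `c = lim_{δ→0} inf_{Θ_δ} L > 0`, then
`E_n(L f) / E_n(L) → f_max`. -/
theorem stmt_2 (k : ℕ) (Θ : Set (Fin k → ℝ)) (hΘ : IsCompact Θ)
    (p : ℕ → (Fin k → ℝ) → ℝ)
    (hp0 : ∀ n, ∀ θ ∈ Θ, 0 ≤ p n θ)
    (hpm : ∀ n, Measurable (p n))
    (hp1 : ∀ n, ∫ θ in Θ, p n θ = 1)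
    (f : (Fin k → ℝ) → ℝ) (hf : ContinuousOn f Θ)
    (hfb : BddAbove (f '' Θ)) (hf0 : ∀ θ ∈ Θ, 0 ≤ f θ)
    (fmax : ℝ) (hfmax : fmax = sSup (f '' Θ))
    (L : (Fin k → ℝ) → ℝ) (hLm : Measurable L)
    (hL0 : ∀ θ ∈ Θ, 0 ≤ L θ) (hLb : BddAbove (L '' Θ))
    (c : ℝ) (hc : 0 < c)
    (hclim : Tendsto (fun δ => sInf (L '' {θ ∈ Θ | fmax - δ ≤ f θ}))
      (𝓝[>] (0 : ℝ)) (𝓝 c))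
    (hconv : Tendsto (fun n => ∫ θ in Θ, f θ * p n θ) atTop (𝓝 fmax)) :
    Tendsto (fun n => (∫ θ in Θ, f θ * L θ * p n θ) / ∫ θ in Θ, L θ * p n θ)
      atTop (𝓝 fmax) := by
  have hΘm : MeasurableSet Θ := hΘ.isClosed.measurableSet
  set ν : ℕ → Measure (Fin k → ℝ) :=
    fun n => (volume.restrict Θ).withDensity fun θ => ENNReal.ofReal (p n θ)
  have hν (n : ℕ) : IsProbabilityMeasure (ν n) :=
    isProbabilityMeasure_withDensity_ofReal (hp0 n) hΘm (hp1 n)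
  have hE (n : ℕ) (g : (Fin k → ℝ) → ℝ) : ∫ θ, g θ ∂ν n = ∫ θ in Θ, g θ * p n θ :=
    integral_withDensity_ofReal_eq_setIntegral_mul (hp0 n) hΘm (hpm n) g
  have hae (n : ℕ) {P : (Fin k → ℝ) → Prop} (h : ∀ θ ∈ Θ, P θ) : ∀ᵐ θ ∂ν n, P θ :=
    (withDensity_absolutelyContinuous _ _).ae_le (ae_restrict_of_forall_mem hΘm h)
  have hfle : ∀ θ ∈ Θ, f θ ≤ fmax := fun θ hθ => hfmax ▸ le_csSup hfb ⟨θ, hθ, rfl⟩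
  have hLle : ∀ θ ∈ Θ, L θ ≤ sSup (L '' Θ) := fun θ hθ => le_csSup hLb ⟨θ, hθ, rfl⟩
  have hfi (n : ℕ) : Integrable f (ν n) := integrable_of_nonneg_of_le
    ((hf.aestronglyMeasurable hΘm).mono_ac (withDensity_absolutelyContinuous _ _))
    (hae n hf0) (hae n hfle)
  have hε : Tendsto (fun n => fmax - ∫ θ in Θ, f θ * p n θ) atTop (𝓝 0) := by
    simpa using hconv.const_sub fmax
  obtain ⟨δ, hδ, hLδ⟩ := exists_pos_forall_le_of_tendsto_sInf hL0 hclim (half_lt_self hc)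
  have hD (n : ℕ) :
      c / 2 - c / 2 / δ * (fmax - ∫ θ in Θ, f θ * p n θ) ≤ ∫ θ in Θ, L θ * p n θ := by
    have := sub_mul_le_integral_of_le_on_superlevel (half_pos hc).le hδ (hfi n)
      (integrable_of_nonneg_of_le hLm.aestronglyMeasurable (hae n hL0) (hae n hLle))
      (hae n hfle) (hae n hL0) (hae n hLδ)
    simpa only [hE] using this
  have hDev : ∀ᶠ n in atTop, c / 4 ≤ ∫ θ in Θ, L θ * p n θ := by
    have hlim := (hε.const_mul (c / 2 / δ)).const_sub (c / 2)
    rw [mul_zero, sub_zero] at hlim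
    filter_upwards [hlim.eventually (eventually_ge_nhds (by linarith : c / 4 < c / 2))] with n hn
    exact hn.trans (hD n)
  have hMε := hε.const_mul (sSup (L '' Θ))
  rw [mul_zero] at hMε
  refine tendsto_div_of_abs_sub_mul_le (by positivity) hDev hMε (.of_forall fun n => ?_)
  simpa only [hE] using abs_integral_mul_sub_mul_integral_le (hfi n) hLm.aestronglyMeasurable
    (hae n hfle) (hae n hL0) (hae n hLle)
end

section
/- Let Θ ⊂ ℝ^k be compact, (p_n) probability densities on Θ, f : Θ → ℝ bounded continuous nonnegative with f_min = inf f, and L : Θ → ℝ a bounded nonnegative measurable function satisfying c := lim_{δ→0} inf_{θ ∈ Θ̃_δ} L(θ) > 0, where Θ̃_δ = {θ : f(θ) ≤ f_min + δ}. If E_n(f) → f_min, then E_n(L·f)/E_n(L) → f_min as n → ∞. -/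
open MeasureTheory Set Filter Topology

/-- Ratio convergence at the minimum: if `E_n(f) → f_min` and the bounded nonnegative
measurable `L` satisfies `c = lim_{δ→0} inf_{Θ̃_δ} L > 0`, then
`E_n(L f) / E_n(L) → f_min`. -/
theorem stmt_3 (k : ℕ) (Θ : Set (Fin k → ℝ)) (hΘ : IsCompact Θ)
    (p : ℕ → (Fin k → ℝ) → ℝ)
    (hp0 : ∀ n, ∀ θ ∈ Θ, 0 ≤ p n θ)
    (hpm : ∀ n, Measurable (p n))
    (hp1 : ∀ n, ∫ θ in Θ, p n θ = 1)
    (f : (Fin k → ℝ) → ℝ) (hf : ContinuousOn f Θ)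
    (hfb : BddBelow (f '' Θ)) (hf0 : ∀ θ ∈ Θ, 0 ≤ f θ)
    (fmin : ℝ) (hfmin : fmin = sInf (f '' Θ))
    (L : (Fin k → ℝ) → ℝ) (hLm : Measurable L)
    (hL0 : ∀ θ ∈ Θ, 0 ≤ L θ) (hLb : BddAbove (L '' Θ))
    (c : ℝ) (hc : 0 < c)
    (hclim : Tendsto (fun δ => sInf (L '' {θ ∈ Θ | f θ ≤ fmin + δ}))
      (𝓝[>] (0 : ℝ)) (𝓝 c))
    (hconv : Tendsto (fun n => ∫ θ in Θ, f θ * p n θ) atTop (𝓝 fmin)) :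
    Tendsto (fun n => (∫ θ in Θ, f θ * L θ * p n θ) / ∫ θ in Θ, L θ * p n θ)
      atTop (𝓝 fmin) := by
  have hΘc : IsClosed Θ := hΘ.isClosed
  have hΘm : MeasurableSet Θ := hΘc.measurableSet
  rcases Θ.eq_empty_or_nonempty with hΘe | hΘne
  · exfalso; have h1 := hp1 0; rw [hΘe] at h1; simp at h1
  obtain ⟨θ₀, hθ₀Θ, hθ₀min⟩ := hΘ.exists_isMinOn hΘne hf
  have hfge : ∀ θ ∈ Θ, fmin ≤ f θ := by
    intro θ hθ; rw [hfmin]; exact csInf_le hfb ⟨θ, hθ, rfl⟩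
  have hfmin0 : 0 ≤ fmin := by
    rw [hfmin]
    exact le_csInf ⟨f θ₀, θ₀, hθ₀Θ, rfl⟩ (by rintro y ⟨θ, hθ, rfl⟩; exact hf0 θ hθ)
  obtain ⟨M, hM⟩ := hLb
  have hLθ : ∀ θ ∈ Θ, L θ ≤ M := fun θ h => hM ⟨θ, h, rfl⟩
  have hM0 : 0 ≤ M := le_trans (hL0 θ₀ hθ₀Θ) (hLθ θ₀ hθ₀Θ)
  obtain ⟨F, hF⟩ := (hΘ.image_of_continuousOn hf).bddAbove
  have hFθ : ∀ θ ∈ Θ, f θ ≤ F := fun θ h => hF ⟨θ, h, rfl⟩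
  -- choose δ
  obtain ⟨δ, hδinf, hδpos⟩ :=
    ((hclim.eventually (eventually_gt_nhds (show c / 2 < c by linarith))).and
      eventually_mem_nhdsWithin).exists
  rw [mem_Ioi] at hδpos
  set S : Set (Fin k → ℝ) := {θ ∈ Θ | f θ ≤ fmin + δ} with hSdef
  have hSsub : S ⊆ Θ := fun θ hθ => hθ.1
  have hSm : MeasurableSet S := by
    have : S = Θ ∩ f ⁻¹' (Iic (fmin + δ)) := rfl
    rw [this]
    exact (hf.preimage_isClosed_of_isClosed hΘc isClosed_Iic).measurableSet
  have hLS : ∀ θ ∈ S, c / 2 ≤ L θ := by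
    intro θ hθ
    refine le_trans (le_of_lt hδinf) (csInf_le ⟨0, ?_⟩ ⟨θ, hθ, rfl⟩)
    rintro y ⟨θ', hθ', rfl⟩; exact hL0 θ' (hθ'.1)
  -- integrability
  have hpint : ∀ n, IntegrableOn (p n) Θ := by
    intro n
    by_contra h
    have h1 := hp1 n
    rw [integral_undef h] at h1
    norm_num at h1
  have hfaem : AEStronglyMeasurable f (volume.restrict Θ) :=
    hf.aestronglyMeasurable hΘm
  have hLaem : AEStronglyMeasurable L (volume.restrict Θ) :=
    hLm.aestronglyMeasurable
  have hfbd : ∀ᵐ θ ∂(volume.restrict Θ), ‖f θ‖ ≤ F :=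
    (ae_restrict_iff' hΘm).2 (ae_of_all _ fun θ hθ => by
      rw [Real.norm_of_nonneg (hf0 θ hθ)]; exact hFθ θ hθ)
  have hLbd : ∀ᵐ θ ∂(volume.restrict Θ), ‖L θ‖ ≤ M :=
    (ae_restrict_iff' hΘm).2 (ae_of_all _ fun θ hθ => by
      rw [Real.norm_of_nonneg (hL0 θ hθ)]; exact hLθ θ hθ)
  have hfp : ∀ n, IntegrableOn (fun θ => f θ * p n θ) Θ :=
    fun n => (hpint n).bdd_mul hfaem hfbd
  have hLp : ∀ n, IntegrableOn (fun θ => L θ * p n θ) Θ :=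
    fun n => (hpint n).bdd_mul hLaem hLbd
  have hfLp : ∀ n, IntegrableOn (fun θ => f θ * L θ * p n θ) Θ := by
    intro n
    refine (hpint n).bdd_mul (c := F * M) (hfaem.mul hLaem) ?_
    filter_upwards [hfbd, hLbd] with θ h1 h2
    calc ‖f θ * L θ‖ ≤ ‖f θ‖ * ‖L θ‖ := norm_mul_le _ _
      _ ≤ F * M := mul_le_mul h1 h2 (norm_nonneg _) (le_trans (norm_nonneg _) h1)
  -- g := (f - fmin) * p n
  have hgint : ∀ n, IntegrableOn (fun θ => (f θ - fmin) * p n θ) Θ := by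
    intro n
    have : (fun θ => (f θ - fmin) * p n θ)
        = fun θ => f θ * p n θ - fmin * p n θ := by funext θ; ring
    rw [this]
    exact (hfp n).sub ((hpint n).const_mul fmin)
  have hgval : ∀ n, ∫ θ in Θ, (f θ - fmin) * p n θ
      = (∫ θ in Θ, f θ * p n θ) - fmin := by
    intro n
    have : (fun θ => (f θ - fmin) * p n θ)
        = fun θ => f θ * p n θ - fmin * p n θ := by funext θ; ring
    rw [this, integral_sub (hfp n) ((hpint n).const_mul fmin),
      integral_const_mul, hp1 n, mul_one]
  have hafmin : ∀ n, fmin ≤ ∫ θ in Θ, f θ * p n θ := by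
    intro n
    have h1 : ∫ θ in Θ, fmin * p n θ ≤ ∫ θ in Θ, f θ * p n θ :=
      setIntegral_mono_on ((hpint n).const_mul fmin) (hfp n) hΘm
        (fun θ hθ => mul_le_mul_of_nonneg_right (hfge θ hθ) (hp0 n θ hθ))
    rwa [integral_const_mul, hp1 n, mul_one] at h1
  -- main eventual bounds
  set a : ℕ → ℝ := fun n => ∫ θ in Θ, f θ * p n θ with ha
  have hev : ∀ᶠ n in atTop, a n < fmin + δ / 2 :=
    hconv.eventually (eventually_lt_nhds (by linarith))
  have key : ∀ᶠ n in atTop,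
      fmin ≤ (∫ θ in Θ, f θ * L θ * p n θ) / (∫ θ in Θ, L θ * p n θ) ∧
      (∫ θ in Θ, f θ * L θ * p n θ) / (∫ θ in Θ, L θ * p n θ)
        ≤ fmin + (4 * M / c) * (a n - fmin) := by
    filter_upwards [hev] with n hn
    set T : Set (Fin k → ℝ) := Θ \ S with hTdef
    have hTsub : T ⊆ Θ := diff_subset
    have hTm : MeasurableSet T := hΘm.diff hSm
    have hsplit : (∫ θ in S, p n θ) + ∫ θ in T, p n θ = 1 := by
      rw [← setIntegral_union disjoint_sdiff_right hTm
        ((hpint n).mono_set hSsub) ((hpint n).mono_set hTsub),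
        union_diff_cancel hSsub, hp1 n]
    have hgnn : 0 ≤ᵐ[volume.restrict Θ] fun θ => (f θ - fmin) * p n θ :=
      (ae_restrict_iff' hΘm).2 (ae_of_all _ fun θ hθ =>
        mul_nonneg (by linarith [hfge θ hθ]) (hp0 n θ hθ))
    have hTbound : ∫ θ in T, p n θ ≤ (a n - fmin) / δ := by
      rw [le_div_iff₀ hδpos]
      have h1 : (∫ θ in T, p n θ) * δ = ∫ θ in T, δ * p n θ := by
        rw [integral_const_mul]; ring
      rw [h1]
      have h2 : ∫ θ in T, δ * p n θ ≤ ∫ θ in T, (f θ - fmin) * p n θ := by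
        refine setIntegral_mono_on (((hpint n).mono_set hTsub).const_mul δ)
          ((hgint n).mono_set hTsub) hTm ?_
        intro θ hθ
        have hθΘ : θ ∈ Θ := hθ.1
        have : ¬ (f θ ≤ fmin + δ) := fun h => hθ.2 ⟨hθΘ, h⟩
        have : fmin + δ < f θ := lt_of_not_ge this
        exact mul_le_mul_of_nonneg_right (by linarith) (hp0 n θ hθΘ)
      have h3 : ∫ θ in T, (f θ - fmin) * p n θ ≤ ∫ θ in Θ, (f θ - fmin) * p n θ :=
        setIntegral_mono_set (hgint n) hgnn (HasSubset.Subset.eventuallyLE hTsub)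
      rw [hgval n] at h3
      linarith
    have hSp : 1 / 2 ≤ ∫ θ in S, p n θ := by
      have h2 : (a n - fmin) / δ < 1 / 2 := by
        rw [div_lt_iff₀ hδpos]; linarith
      linarith
    have hSplb : 0 ≤ ∫ θ in S, p n θ := by
      refine setIntegral_nonneg hSm fun θ hθ => hp0 n θ hθ.1
    have hEn : c / 4 ≤ ∫ θ in Θ, L θ * p n θ := by
      have h1 : ∫ θ in S, (c / 2) * p n θ ≤ ∫ θ in S, L θ * p n θ :=
        setIntegral_mono_on (((hpint n).mono_set hSsub).const_mul _)
          ((hLp n).mono_set hSsub) hSm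
          (fun θ hθ => mul_le_mul_of_nonneg_right (hLS θ hθ) (hp0 n θ hθ.1))
      rw [integral_const_mul] at h1
      have h2 : ∫ θ in S, L θ * p n θ ≤ ∫ θ in Θ, L θ * p n θ := by
        refine setIntegral_mono_set (hLp n) ?_ (HasSubset.Subset.eventuallyLE hSsub)
        exact (ae_restrict_iff' hΘm).2 (ae_of_all _ fun θ hθ =>
          mul_nonneg (hL0 θ hθ) (hp0 n θ hθ))
      nlinarith
    have hEnpos : 0 < ∫ θ in Θ, L θ * p n θ := by linarith
    -- lower bound for numerator
    have hFnlb : fmin * ∫ θ in Θ, L θ * p n θ ≤ ∫ θ in Θ, f θ * L θ * p n θ := by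
      have h1 : ∫ θ in Θ, fmin * (L θ * p n θ) ≤ ∫ θ in Θ, f θ * L θ * p n θ := by
        refine setIntegral_mono_on ((hLp n).const_mul fmin) (hfLp n) hΘm ?_
        intro θ hθ
        rw [← mul_assoc]
        exact mul_le_mul_of_nonneg_right
          (mul_le_mul_of_nonneg_right (hfge θ hθ) (hL0 θ hθ)) (hp0 n θ hθ)
      rwa [integral_const_mul] at h1
    -- upper bound for numerator
    have hnum : (∫ θ in Θ, f θ * L θ * p n θ)
        - fmin * ∫ θ in Θ, L θ * p n θ ≤ M * (a n - fmin) := by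
      have heq : (∫ θ in Θ, f θ * L θ * p n θ) - fmin * ∫ θ in Θ, L θ * p n θ
          = ∫ θ in Θ, (f θ - fmin) * L θ * p n θ := by
        have : (fun θ => (f θ - fmin) * L θ * p n θ)
            = fun θ => f θ * L θ * p n θ - fmin * (L θ * p n θ) := by
          funext θ; ring
        rw [this, integral_sub (hfLp n) ((hLp n).const_mul fmin), integral_const_mul]
      have hint : IntegrableOn (fun θ => (f θ - fmin) * L θ * p n θ) Θ := by
        have : (fun θ => (f θ - fmin) * L θ * p n θ)
            = fun θ => f θ * L θ * p n θ - fmin * (L θ * p n θ) := by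
          funext θ; ring
        rw [this]
        exact (hfLp n).sub ((hLp n).const_mul fmin)
      have h1 : ∫ θ in Θ, (f θ - fmin) * L θ * p n θ
          ≤ ∫ θ in Θ, M * ((f θ - fmin) * p n θ) := by
        refine setIntegral_mono_on hint ((hgint n).const_mul M) hΘm ?_
        intro θ hθ
        have h0 : 0 ≤ f θ - fmin := by linarith [hfge θ hθ]
        have := hp0 n θ hθ
        have := hL0 θ hθ
        have := hLθ θ hθ
        have h4 : 0 ≤ (M - L θ) * ((f θ - fmin) * p n θ) :=
          mul_nonneg (by linarith) (mul_nonneg h0 (hp0 n θ hθ))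
        nlinarith [h4]
      rw [integral_const_mul, hgval n] at h1
      rw [heq]
      exact h1
    constructor
    · rw [le_div_iff₀ hEnpos]
      exact hFnlb
    · rw [div_le_iff₀ hEnpos]
      have hq0 : 0 ≤ a n - fmin := by linarith [hafmin n]
      have hkey : M * (a n - fmin) * c ≤ 4 * M * (a n - fmin) * (∫ θ in Θ, L θ * p n θ) := by
        nlinarith [mul_nonneg (mul_nonneg hM0 hq0) (show (0:ℝ) ≤ (∫ θ in Θ, L θ * p n θ) - c / 4 by linarith)]
      have h5 : M * (a n - fmin) ≤ 4 * M / c * (a n - fmin) * (∫ θ in Θ, L θ * p n θ) := by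
        rw [div_mul_eq_mul_div, div_mul_eq_mul_div, le_div_iff₀ hc]
        linarith
      nlinarith [hnum, h5]
  have hub : Tendsto (fun n => fmin + (4 * M / c) * (a n - fmin)) atTop (𝓝 fmin) := by
    have : Tendsto (fun n => a n - fmin) atTop (𝓝 0) := by
      simpa using hconv.sub (tendsto_const_nhds (x := fmin))
    have h2 := this.const_mul (4 * M / c)
    simpa using (tendsto_const_nhds (x := fmin)).add h2
  exact tendsto_of_tendsto_of_tendsto_of_le_of_le'
    (tendsto_const_nhds) hub
    (key.mono fun n hn => hn.1) (key.mono fun n hn => hn.2)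
end

section
/- Let Θ be the k-dimensional probability simplex, f : Θ → ℝ bounded continuous, and M a set of probability densities on Θ with upper expectation E̅(f) := sup_{p∈M} ∫ f p dθ = f_max := sup_Θ f. Let L : Θ → ℝ (the likelihood of observed data) be bounded, nonnegative, measurable, strictly positive at each maximizer of f and continuous on a neighborhood of each maximizer. Then the posterior upper expectation satisfies E̅(f | data) := sup_{p∈M} (∫ f L p dθ)/(∫ L p dθ) = f_max, i.e., the upper expectation of f remains vacuous after updating by Bayes' rule. -/
/-!
Let `V` be an open neighbourhood of the maximizers of `f` on which `L ≥ c > 0` and `f` is within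
`ε` of its maximum; by compactness `f ≤ f_max - η` off `V`. A prior `p` with
`∫ f p > f_max - η q` puts mass less than `q` outside `V`, so the normalizer `∫ L p` is at least
`c (1 - q)`, while the part of `∫ (f_max - f) L p` coming from outside `V` is `O(q)`. Hence the
posterior mean of `f` is at least `f_max - 2ε` once `q` is small.
-/

open MeasureTheory Set Filter Topology

theorem sSup_image_eq_of_near_sSup {ι : Type*} {M T : Set ι} {g h : ι → ℝ} {m : ℝ}
    (hg : sSup (g '' M) = m) (hTM : T ⊆ M) (hle : ∀ x ∈ T, h x ≤ m)
    (hnear : ∀ ε > 0, ∃ δ > 0, ∀ x ∈ M, m - δ < g x → x ∈ T ∧ m - ε ≤ h x) :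
    sSup (h '' T) = m := by
  rcases M.eq_empty_or_nonempty with rfl | hM
  · rw [subset_empty_iff.1 hTM, image_empty, Real.sSup_empty, ← hg, image_empty, Real.sSup_empty]
  have hT : ∀ ε > 0, ∃ x ∈ T, m - ε ≤ h x := fun ε hε => by
    obtain ⟨δ, hδ, hδT⟩ := hnear ε hε
    obtain ⟨_, ⟨x, hx, rfl⟩, hgx⟩ :=
      exists_lt_of_lt_csSup (hM.image g) (show m - δ < sSup (g '' M) by linarith)
    exact ⟨x, hδT x hx hgx⟩
  obtain ⟨x₀, hx₀, -⟩ := hT 1 one_pos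
  refine csSup_eq_of_forall_le_of_forall_lt_exists_gt ⟨_, mem_image_of_mem h hx₀⟩
    (forall_mem_image.2 hle) fun w hw => ?_
  obtain ⟨x, hx, hhx⟩ := hT ((m - w) / 2) (by linarith)
  exact ⟨h x, mem_image_of_mem h hx, by linarith⟩

section Topology

variable {α : Type*} [TopologicalSpace α] {f L : α → ℝ} {S : Set α} {m : ℝ}

theorem IsCompact.exists_pos_eventually_nhdsSet_lt {A : Set α} (hA : IsCompact A)
    (hL : ∀ a ∈ A, ContinuousAt L a) (hpos : ∀ a ∈ A, 0 < L a) :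
    ∃ c > 0, ∀ᶠ x in 𝓝ˢ A, c < L x := by
  obtain ⟨b, hb, hbL⟩ := hA.exists_forall_le' (continuousOn_of_forall_continuousAt hL) hpos
  refine ⟨b / 2, half_pos hb, eventually_nhdsSet_iff_forall.2 fun a ha => ?_⟩
  exact (hL a ha).eventually (lt_mem_nhds ((half_lt_self hb).trans_le (hbL a ha)))

theorem IsCompact.exists_isOpen_near_maximizers [T2Space α] (hS : IsCompact S)
    (hf : ContinuousOn f S) (hfm : ∀ x ∈ S, f x ≤ m) (hLc : ∀ x ∈ S, f x = m → ContinuousAt L x)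
    (hLpos : ∀ x ∈ S, f x = m → 0 < L x) {ε : ℝ} (hε : 0 < ε) :
    ∃ V, IsOpen V ∧ (∃ c > 0, ∀ x ∈ V, c ≤ L x) ∧ (∀ x ∈ S ∩ V, m - ε ≤ f x) ∧
      ∃ η > 0, ∀ x ∈ S \ V, f x ≤ m - η := by
  set A := S ∩ f ⁻¹' {m}
  have hA : IsCompact A := hS.of_isClosed_subset
    (hf.preimage_isClosed_of_isClosed hS.isClosed isClosed_singleton) inter_subset_left
  obtain ⟨c, hc, hcL⟩ := hA.exists_pos_eventually_nhdsSet_lt (fun a ha => hLc a ha.1 ha.2)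
    fun a ha => hLpos a ha.1 ha.2
  have hfA : ∀ᶠ x in 𝓝ˢ A, x ∈ S → m - ε < f x := eventually_nhdsSet_iff_forall.2 fun a ha =>
    eventually_nhdsWithin_iff.1 <| hf a ha.1 <| lt_mem_nhds <| by
      rw [show f a = m from ha.2]; linarith
  obtain ⟨V, hVo, hAV, hV⟩ := eventually_nhdsSet_iff_exists.1 (hcL.and hfA)
  have hlt : ∀ x ∈ S \ V, 0 < m - f x := fun x hx =>
    sub_pos.2 <| (hfm x hx.1).lt_of_ne fun h => hx.2 (hAV ⟨hx.1, h⟩)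
  obtain ⟨η, hη, hgap⟩ :=
    (hS.diff hVo).exists_forall_le' (continuousOn_const.sub (hf.mono sdiff_subset)) hlt
  refine ⟨V, hVo, ⟨c, hc, fun x hx => (hV x hx).1.le⟩, fun x hx => ((hV x hx.2).2 hx.1).le,
    η, hη, fun x hx => ?_⟩
  linarith [show η ≤ m - f x from hgap x hx]

end Topology

section Integrals

variable {α : Type*} [MeasurableSpace α] {μ : Measure α} {f L p : α → ℝ} {V : Set α}
  {S : Set α} {m c ε η K : ℝ}

def IsProbDensity (μ : Measure α) (p : α → ℝ) : Prop :=
  (∀ x, 0 ≤ p x) ∧ Integrable p μ ∧ ∫ x, p x ∂μ = 1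

theorem integral_mul_le_mul_integral_of_ae_le {w : α → ℝ}
    (hfw : Integrable (fun x => f x * w x) μ) (hw : Integrable w μ) (hw0 : ∀ᵐ x ∂μ, 0 ≤ w x)
    (hf : ∀ᵐ x ∂μ, f x ≤ m) : ∫ x, f x * w x ∂μ ≤ m * ∫ x, w x ∂μ := by
  rw [← integral_const_mul]
  refine integral_mono_ae hfw (hw.const_mul m) ?_
  filter_upwards [hw0, hf] with x hw0 hf
  exact mul_le_mul_of_nonneg_right hf hw0

theorem mul_setIntegral_compl_le_sub_integral (hV : MeasurableSet V) (hp : Integrable p μ)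
    (hp0 : ∀ᵐ x ∂μ, 0 ≤ p x) (hp1 : ∫ x, p x ∂μ = 1) (hfp : Integrable (fun x => f x * p x) μ)
    (hf : ∀ᵐ x ∂μ, f x ≤ m) (hgap : ∀ᵐ x ∂μ, x ∉ V → f x ≤ m - η) :
    η * ∫ x in Vᶜ, p x ∂μ ≤ m - ∫ x, f x * p x ∂μ := by
  have key : ∫ x, f x * p x ∂μ ≤ ∫ x, (m * p x - η * Vᶜ.indicator p x) ∂μ := by
    refine integral_mono_ae hfp ((hp.const_mul m).sub ((hp.indicator hV.compl).const_mul η)) ?_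
    filter_upwards [hp0, hf, hgap] with x hp0 hf hgap
    by_cases hx : x ∈ V
    · simpa [hx] using mul_le_mul_of_nonneg_right hf hp0
    · simpa [hx, sub_mul] using mul_le_mul_of_nonneg_right (hgap hx) hp0
  rw [integral_sub (hp.const_mul m) ((hp.indicator hV.compl).const_mul η), integral_const_mul,
    integral_const_mul, integral_indicator hV.compl, hp1] at key
  linarith

theorem mul_setIntegral_le_integral_mul (hV : MeasurableSet V) (hp : Integrable p μ)
    (hLp : Integrable (fun x => L x * p x) μ) (hp0 : ∀ᵐ x ∂μ, 0 ≤ p x)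
    (hL0 : ∀ᵐ x ∂μ, 0 ≤ L x) (hLV : ∀ x ∈ V, c ≤ L x) :
    c * ∫ x in V, p x ∂μ ≤ ∫ x, L x * p x ∂μ := by
  rw [← integral_indicator hV, ← integral_const_mul]
  refine integral_mono_ae ((hp.indicator hV).const_mul c) hLp ?_
  filter_upwards [hp0, hL0] with x hp0 hL0
  by_cases hx : x ∈ V
  · simpa [hx] using mul_le_mul_of_nonneg_right (hLV x hx) hp0
  · simpa [hx] using mul_nonneg hL0 hp0

theorem mul_integral_sub_integral_le (hε : 0 ≤ ε) (hV : MeasurableSet V) (hp : Integrable p μ)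
    (hLp : Integrable (fun x => L x * p x) μ) (hfLp : Integrable (fun x => f x * L x * p x) μ)
    (hp0 : ∀ᵐ x ∂μ, 0 ≤ p x) (hL0 : ∀ᵐ x ∂μ, 0 ≤ L x) (hfV : ∀ᵐ x ∂μ, x ∈ V → m - ε ≤ f x)
    (hK : ∀ᵐ x ∂μ, (m - f x) * L x ≤ K) :
    m * ∫ x, L x * p x ∂μ - ∫ x, f x * L x * p x ∂μ ≤
      ε * ∫ x, L x * p x ∂μ + K * ∫ x in Vᶜ, p x ∂μ := by
  have key : ∫ x, ((m - ε) * (L x * p x) - K * Vᶜ.indicator p x) ∂μ ≤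
      ∫ x, f x * L x * p x ∂μ := by
    refine integral_mono_ae ((hLp.const_mul _).sub ((hp.indicator hV.compl).const_mul K)) hfLp ?_
    filter_upwards [hp0, hL0, hfV, hK] with x hp0 hL0 hfV hK
    have hLp0 : 0 ≤ L x * p x := mul_nonneg hL0 hp0
    by_cases hx : x ∈ V
    · simp only [hx, not_true_eq_false, not_false_eq_true, indicator_of_notMem, mem_compl_iff]
      nlinarith [hfV hx]
    · simp only [hx, not_false_eq_true, indicator_of_mem, mem_compl_iff]
      nlinarith [mul_le_mul_of_nonneg_right hK hp0]
  rw [integral_sub (hLp.const_mul _) ((hp.indicator hV.compl).const_mul K), integral_const_mul,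
    integral_const_mul, integral_indicator hV.compl] at key
  linarith

theorem posterior_le (hsupp : ∀ᵐ x ∂μ, x ∈ S) (hfm : ∀ x ∈ S, f x ≤ m)
    (hL0 : ∀ x ∈ S, 0 ≤ L x) (hp0 : ∀ x, 0 ≤ p x) (hLp : Integrable (fun x => L x * p x) μ)
    (hfLp : Integrable (fun x => f x * L x * p x) μ) (hpos : 0 < ∫ x, L x * p x ∂μ) :
    (∫ x, f x * L x * p x ∂μ) / ∫ x, L x * p x ∂μ ≤ m := by
  rw [div_le_iff₀ hpos]
  simpa only [mul_assoc] using integral_mul_le_mul_integral_of_ae_le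
    (by simpa only [mul_assoc] using hfLp) hLp
    (by filter_upwards [hsupp] with x hx using mul_nonneg (hL0 x hx) (hp0 x))
    (by filter_upwards [hsupp] with x hx using hfm x hx)

end Integrals

theorem pos_and_sub_le_div_of_le {c ε q K N I m : ℝ} (hc : 0 < c) (hε : 0 ≤ ε) (hq : q ≤ 1 / 2)
    (hKq : K * q ≤ ε * c / 2) (hN : c * (1 - q) ≤ N) (hI : m * N - I ≤ ε * N + K * q) :
    0 < N ∧ m - 2 * ε ≤ I / N := by
  have hN2 : c / 2 ≤ N := by nlinarith
  have hN0 : 0 < N := by linarith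
  refine ⟨hN0, (le_div_iff₀ hN0).2 ?_⟩
  nlinarith

section Posterior

variable {α : Type*} [TopologicalSpace α] [T2Space α] [MeasurableSpace α]
  [OpensMeasurableSpace α] {μ : Measure α} {S : Set α} {f L p : α → ℝ} {m : ℝ}

theorem integrable_posterior_integrands (hS : IsCompact S) (hsupp : ∀ᵐ x ∂μ, x ∈ S)
    (hf : ContinuousOn f S) (hLm : Measurable L) (hL0 : ∀ x ∈ S, 0 ≤ L x)
    (hLb : BddAbove (L '' S)) (hp : Integrable p μ) :
    Integrable (fun x => f x * p x) μ ∧ Integrable (fun x => L x * p x) μ ∧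
      Integrable (fun x => f x * L x * p x) μ := by
  have hfm : AEStronglyMeasurable f μ := by
    simpa only [Measure.restrict_eq_self_of_ae_mem hsupp] using
      hf.aestronglyMeasurable_of_isCompact (μ := μ) hS hS.isClosed.measurableSet
  obtain ⟨F, hF⟩ := hS.exists_bound_of_continuousOn hf
  obtain ⟨B, hB⟩ := hLb
  have hfF : ∀ᵐ x ∂μ, ‖f x‖ ≤ F := by filter_upwards [hsupp] with x hx using hF x hx
  have hLB : ∀ᵐ x ∂μ, ‖L x‖ ≤ B := by
    filter_upwards [hsupp] with x hx
    rw [Real.norm_of_nonneg (hL0 x hx)]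
    exact hB (mem_image_of_mem L hx)
  refine ⟨hp.bdd_mul hfm hfF, hp.bdd_mul hLm.aestronglyMeasurable hLB,
    hp.bdd_mul (hfm.mul hLm.aestronglyMeasurable) (c := F * B) ?_⟩
  filter_upwards [hfF, hLB] with x hfx hLx
  rw [norm_mul]
  exact mul_le_mul hfx hLx (norm_nonneg _) ((norm_nonneg _).trans hfx)

theorem exists_forall_posterior_ge (hS : IsCompact S) (hsupp : ∀ᵐ x ∂μ, x ∈ S)
    (hf : ContinuousOn f S) (hfm : ∀ x ∈ S, f x ≤ m) (hLm : Measurable L)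
    (hL0 : ∀ x ∈ S, 0 ≤ L x) (hLb : BddAbove (L '' S)) (hLpos : ∀ x ∈ S, f x = m → 0 < L x)
    (hLc : ∀ x ∈ S, f x = m → ContinuousAt L x) {ε : ℝ} (hε : 0 < ε) :
    ∃ δ > 0, ∀ p, IsProbDensity μ p → m - δ < ∫ x, f x * p x ∂μ →
      0 < ∫ x, L x * p x ∂μ ∧ m - ε ≤ (∫ x, f x * L x * p x ∂μ) / ∫ x, L x * p x ∂μ := by
  obtain ⟨V, hVo, ⟨c, hc, hcL⟩, hfV, η, hη, hgap⟩ :=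
    hS.exists_isOpen_near_maximizers hf hfm hLc hLpos (half_pos hε)
  obtain ⟨b, hb⟩ := hS.bddBelow_image hf
  obtain ⟨B, hB⟩ := hLb
  set K := |m - b| * |B|
  obtain ⟨q₁, hq₁, hKq₁⟩ := exists_pos_mul_lt (by positivity : 0 < ε / 2 * c / 2) K
  set q₀ := min (1 / 2) q₁
  refine ⟨η * q₀, mul_pos hη (lt_min one_half_pos hq₁), fun p ⟨hp0, hp, hp1⟩ hprior => ?_⟩
  obtain ⟨hfp, hLp, hfLp⟩ := integrable_posterior_integrands hS hsupp hf hLm hL0 ⟨B, hB⟩ hp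
  have hV := hVo.measurableSet
  have hp0' : ∀ᵐ x ∂μ, 0 ≤ p x := ae_of_all _ hp0
  have hL0' : ∀ᵐ x ∂μ, 0 ≤ L x := by filter_upwards [hsupp] with x hx using hL0 x hx
  have hmass := mul_setIntegral_compl_le_sub_integral hV hp hp0' hp1 hfp
    (by filter_upwards [hsupp] with x hx using hfm x hx)
    (by filter_upwards [hsupp] with x hx hxV using hgap x ⟨hx, hxV⟩)
  have hnorm := mul_setIntegral_le_integral_mul hV hp hLp hp0' hL0' hcL
  have hdef := mul_integral_sub_integral_le (half_pos hε).le hV hp hLp hfLp hp0' hL0'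
    (by filter_upwards [hsupp] with x hx hxV using hfV x ⟨hx, hxV⟩)
    (K := K) (by
      filter_upwards [hsupp] with x hx
      refine mul_le_mul ?_ ((hB (mem_image_of_mem L hx)).trans (le_abs_self B)) (hL0 x hx)
        (abs_nonneg _)
      linarith [hb (mem_image_of_mem f hx), le_abs_self (m - b)])
  have hsplit : ∫ x in V, p x ∂μ = 1 - ∫ x in Vᶜ, p x ∂μ := by
    linarith [integral_add_compl hV hp]
  have hq : ∫ x in Vᶜ, p x ∂μ < q₀ := lt_of_mul_lt_mul_left (by linarith) hη.le
  have hKq : K * ∫ x in Vᶜ, p x ∂μ ≤ ε / 2 * c / 2 :=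
    ((mul_le_mul_of_nonneg_left (hq.le.trans (min_le_right _ _)) (by positivity)).trans hKq₁.le)
  have := pos_and_sub_le_div_of_le hc (half_pos hε).le (hq.le.trans (min_le_left _ _)) hKq
    (hsplit ▸ hnorm) hdef
  simpa only [mul_div_cancel₀ _ (two_ne_zero' ℝ)] using this

end Posterior

theorem stmt_5_general (k : ℕ)
    (μ : Measure (Fin k → ℝ))
    (hsupp : ∀ᵐ θ ∂μ, θ ∈ stdSimplex ℝ (Fin k))
    (M : Set ((Fin k → ℝ) → ℝ))
    (hM : ∀ p ∈ M, (∀ θ, 0 ≤ p θ) ∧ Integrable p μ ∧ ∫ θ, p θ ∂μ = 1)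
    (f : (Fin k → ℝ) → ℝ) (hf : ContinuousOn f (stdSimplex ℝ (Fin k)))
    (fmax : ℝ) (hfmax : fmax = sSup (f '' stdSimplex ℝ (Fin k)))
    (hprior : sSup ((fun p => ∫ θ, f θ * p θ ∂μ) '' M) = fmax)
    (L : (Fin k → ℝ) → ℝ) (hLm : Measurable L)
    (hL0 : ∀ θ ∈ stdSimplex ℝ (Fin k), 0 ≤ L θ)
    (hLb : BddAbove (L '' stdSimplex ℝ (Fin k)))
    (hLpos : ∀ θ ∈ stdSimplex ℝ (Fin k), f θ = fmax → 0 < L θ)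
    (hLcont : ∀ θ ∈ stdSimplex ℝ (Fin k), f θ = fmax → ∃ U ∈ 𝓝 θ, ContinuousOn L U) :
    sSup ((fun p => (∫ θ, f θ * L θ * p θ ∂μ) / ∫ θ, L θ * p θ ∂μ) ''
        {p ∈ M | 0 < ∫ θ, L θ * p θ ∂μ}) = fmax := by
  have hS : IsCompact (stdSimplex ℝ (Fin k)) := isCompact_stdSimplex _ _
  have hfm : ∀ θ ∈ stdSimplex ℝ (Fin k), f θ ≤ fmax := fun θ hθ =>
    hfmax ▸ le_csSup (hS.bddAbove_image hf) (mem_image_of_mem f hθ)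
  have hLc : ∀ θ ∈ stdSimplex ℝ (Fin k), f θ = fmax → ContinuousAt L θ := fun θ hθ hθm =>
    let ⟨_, hU, hLU⟩ := hLcont θ hθ hθm
    hLU.continuousAt hU
  refine sSup_image_eq_of_near_sSup hprior (sep_subset _ _) (fun p ⟨hpM, hpos⟩ => ?_)
    fun ε hε => ?_
  · obtain ⟨-, hLp, hfLp⟩ :=
      integrable_posterior_integrands hS hsupp hf hLm hL0 hLb (hM p hpM).2.1
    exact posterior_le hsupp hfm hL0 (hM p hpM).1 hLp hfLp hpos
  · obtain ⟨δ, hδ, hnear⟩ := exists_forall_posterior_ge hS hsupp hf hfm hLm hL0 hLb hLpos hLc hε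
    exact ⟨δ, hδ, fun p hpM hp => ⟨⟨hpM, (hnear p (hM p hpM) hp).1⟩, (hnear p (hM p hpM) hp).2⟩⟩

/-- Vacuity of the posterior upper expectation: if the prior upper expectation of `f`
over the set of densities `M` on the simplex is the vacuous value `f_max`, and the
likelihood `L` is bounded, nonnegative, measurable, strictly positive at each maximizer
of `f` and continuous near each maximizer, then the posterior upper expectation
(over densities with positive normalizer) is still `f_max`. -/
theorem stmt_5 (k : ℕ) (hk : 0 < k)
    (μ : Measure (Fin k → ℝ))
    (hsupp : ∀ᵐ θ ∂μ, θ ∈ stdSimplex ℝ (Fin k))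
    (M : Set ((Fin k → ℝ) → ℝ))
    (hM : ∀ p ∈ M, (∀ θ, 0 ≤ p θ) ∧ Integrable p μ ∧ ∫ θ, p θ ∂μ = 1)
    (f : (Fin k → ℝ) → ℝ) (hf : ContinuousOn f (stdSimplex ℝ (Fin k)))
    (fmax : ℝ) (hfmax : fmax = sSup (f '' stdSimplex ℝ (Fin k)))
    (hprior : sSup ((fun p => ∫ θ, f θ * p θ ∂μ) '' M) = fmax)
    (L : (Fin k → ℝ) → ℝ) (hLm : Measurable L)
    (hL0 : ∀ θ ∈ stdSimplex ℝ (Fin k), 0 ≤ L θ)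
    (hLb : BddAbove (L '' stdSimplex ℝ (Fin k)))
    (hLpos : ∀ θ ∈ stdSimplex ℝ (Fin k), f θ = fmax → 0 < L θ)
    (hLcont : ∀ θ ∈ stdSimplex ℝ (Fin k), f θ = fmax → ∃ U ∈ 𝓝 θ, ContinuousOn L U) :
    sSup ((fun p => (∫ θ, f θ * L θ * p θ ∂μ) / ∫ θ, L θ * p θ ∂μ) ''
        {p ∈ M | 0 < ∫ θ, L θ * p θ ∂μ}) = fmax :=
  stmt_5_general k μ hsupp M hM f hf fmax hfmax hprior L hLm hL0 hLb hLpos hLcont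
end

section
/- Let Θ be the k-dimensional probability simplex, L : Θ → ℝ a continuous strictly positive function, f : Θ → ℝ bounded continuous, and M a set of probability densities on Θ such that inf_{p∈M} E_p(f) = inf_Θ f and sup_{p∈M} E_p(f) = sup_Θ f (vacuous prior expectations). Then the posterior expectations obtained by Bayes updating with likelihood L are also vacuous: inf_{p∈M} E_p(f|L) = inf_Θ f and sup_{p∈M} E_p(f|L) = sup_Θ f, where E_p(f|L) = ∫ f L p dθ / ∫ L p dθ. -/
open MeasureTheory Set

/-!
On the simplex `L` lies between `c = min L > 0` and `D = max L`. For a prior density `p`,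
`∫ (f - min f) L p ≤ D ∫ (f - min f) p` and `∫ L p ≥ c`, so the posterior mean exceeds
`min f` by at most `D / c` times the excess of the prior mean. Hence priors whose means
approach `min f` have posterior means approaching `min f`; the same holds at `max f`.
-/

theorem Real.sInf_image_eq_of_sub_le_mul {ι : Type*} {M : Set ι} {g h : ι → ℝ} {m K : ℝ}
    (hK : 0 < K) (hm : ∀ p ∈ M, m ≤ h p) (hle : ∀ p ∈ M, h p - m ≤ K * (g p - m))
    (hg : sInf (g '' M) = m) : sInf (h '' M) = m := by
  rcases M.eq_empty_or_nonempty with rfl | hMne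
  · simpa using hg
  refine le_antisymm ?_ (le_csInf (hMne.image h) (forall_mem_image.2 hm))
  by_contra! hlt
  set ε := (sInf (h '' M) - m) / K
  have hε : 0 < ε := div_pos (sub_pos.2 hlt) hK
  obtain ⟨_, ⟨p, hp, rfl⟩, hgp⟩ :=
    exists_lt_of_csInf_lt (hMne.image g) (by linarith : sInf (g '' M) < m + ε)
  have hhp : h p < sInf (h '' M) :=
    calc h p ≤ m + K * (g p - m) := by linarith [hle p hp]
      _ < m + K * ε := by gcongr; linarith
      _ = sInf (h '' M) := by rw [mul_div_cancel₀ _ hK.ne']; ring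
  exact hhp.not_ge (csInf_le ⟨m, forall_mem_image.2 hm⟩ (mem_image_of_mem h hp))

theorem Real.sSup_image_eq_of_sub_le_mul {ι : Type*} {M : Set ι} {g h : ι → ℝ} {b K : ℝ}
    (hK : 0 < K) (hb : ∀ p ∈ M, h p ≤ b) (hle : ∀ p ∈ M, b - h p ≤ K * (b - g p))
    (hg : sSup (g '' M) = b) : sSup (h '' M) = b := by
  have neg_image (u : ι → ℝ) : (fun p => -u p) '' M = -(u '' M) := by
    rw [← image_neg_eq_neg, image_image]
  have := Real.sInf_image_eq_of_sub_le_mul (g := fun p => -g p) (h := fun p => -h p) (m := -b) hK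
    (fun p hp => neg_le_neg (hb p hp)) (fun p hp => by linear_combination hle p hp)
    (by rw [neg_image, Real.sInf_neg, hg])
  rw [neg_image, Real.sInf_neg] at this
  exact neg_inj.1 this

theorem IsCompact.mem_Icc_sInf_sSup_image {α : Type*} [TopologicalSpace α] {s : Set α}
    {f : α → ℝ} (hs : IsCompact s) (hf : ContinuousOn f s) {x : α} (hx : x ∈ s) :
    f x ∈ Icc (sInf (f '' s)) (sSup (f '' s)) :=
  have hfs := hs.image_of_continuousOn hf
  ⟨csInf_le hfs.bddBelow (mem_image_of_mem f hx),
    le_csSup hfs.bddAbove (mem_image_of_mem f hx)⟩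

section Posterior

variable {α : Type*} [MeasurableSpace α] {μ : Measure α} {p f L : α → ℝ} {m b c D : ℝ}

theorem le_posterior_and_posterior_sub_le
    (hp0 : ∀ᵐ θ ∂μ, 0 ≤ p θ) (hp : Integrable p μ) (hp1 : ∫ θ, p θ ∂μ = 1)
    (hf : AEStronglyMeasurable f μ) (hfb : ∀ᵐ θ ∂μ, f θ ∈ Icc m b)
    (hL : AEStronglyMeasurable L μ) (hLb : ∀ᵐ θ ∂μ, L θ ∈ Icc c D) (hc : 0 < c) :
    m ≤ (∫ θ, f θ * L θ * p θ ∂μ) / ∫ θ, L θ * p θ ∂μ ∧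
      (∫ θ, f θ * L θ * p θ ∂μ) / (∫ θ, L θ * p θ ∂μ) - m
        ≤ D / c * (∫ θ, f θ * p θ ∂μ - m) := by
  simp only [mul_assoc]
  have hLp : Integrable (fun θ => L θ * p θ) μ :=
    hp.bdd_mul hL <| hLb.mono fun θ hθ => by
      rw [Real.norm_eq_abs, abs_of_pos (hc.trans_le hθ.1)]; exact hθ.2
  have hfn : ∀ᵐ θ ∂μ, ‖f θ‖ ≤ max |m| |b| :=
    hfb.mono fun θ hθ => abs_le_max_abs_abs hθ.1 hθ.2
  have hgn : ∀ᵐ θ ∂μ, ‖f θ - m‖ ≤ b - m := hfb.mono fun θ hθ => by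
    rw [Real.norm_eq_abs, abs_of_nonneg (sub_nonneg.2 hθ.1)]; linarith [hθ.2]
  have hfp := hp.bdd_mul hf hfn
  have hfLp := hLp.bdd_mul hf hfn
  have hgp := hp.bdd_mul (hf.sub aestronglyMeasurable_const) hgn
  have hgLp := hLp.bdd_mul (hf.sub aestronglyMeasurable_const) hgn
  set Z := ∫ θ, L θ * p θ ∂μ
  have hZ : c ≤ Z :=
    calc c = ∫ θ, c * p θ ∂μ := by rw [integral_const_mul, hp1, mul_one]
      _ ≤ Z := integral_mono_ae (hp.const_mul c) hLp <| by
        filter_upwards [hp0, hLb] with θ h0 hθ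
        exact mul_le_mul_of_nonneg_right hθ.1 h0
  have hpost : (∫ θ, f θ * (L θ * p θ) ∂μ) / Z - m =
      (∫ θ, (f θ - m) * (L θ * p θ) ∂μ) / Z := by
    simp_rw [sub_mul]
    rw [integral_sub hfLp (hLp.const_mul m), integral_const_mul, sub_div,
      mul_div_cancel_right₀ m (hc.trans_le hZ).ne']
  have hprior : ∫ θ, f θ * p θ ∂μ - m = ∫ θ, (f θ - m) * p θ ∂μ := by
    simp_rw [sub_mul]
    rw [integral_sub hfp (hp.const_mul m), integral_const_mul, hp1, mul_one]
  have hnum0 : 0 ≤ ∫ θ, (f θ - m) * (L θ * p θ) ∂μ := integral_nonneg_of_ae <| by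
    filter_upwards [hp0, hfb, hLb] with θ h0 hfθ hLθ
    exact mul_nonneg (sub_nonneg.2 hfθ.1) (mul_nonneg (hc.le.trans hLθ.1) h0)
  have hnumD :
      ∫ θ, (f θ - m) * (L θ * p θ) ∂μ ≤ D * ∫ θ, (f θ - m) * p θ ∂μ := by
    rw [← integral_const_mul]
    refine integral_mono_ae hgLp (hgp.const_mul D) ?_
    filter_upwards [hp0, hfb, hLb] with θ h0 hfθ hLθ
    calc (f θ - m) * (L θ * p θ) ≤ (f θ - m) * (D * p θ) := by
          gcongr
          · exact sub_nonneg.2 hfθ.1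
          · exact hLθ.2
      _ = D * ((f θ - m) * p θ) := by ring
  rw [← sub_nonneg, hpost, hprior]
  refine ⟨div_nonneg hnum0 (hc.le.trans hZ), ?_⟩
  calc _ ≤ D * (∫ θ, (f θ - m) * p θ ∂μ) / c :=
        div_le_div₀ (hnum0.trans hnumD) hnumD hc hZ
    _ = _ := by ring

theorem posterior_le_and_sub_posterior_le
    (hp0 : ∀ᵐ θ ∂μ, 0 ≤ p θ) (hp : Integrable p μ) (hp1 : ∫ θ, p θ ∂μ = 1)
    (hf : AEStronglyMeasurable f μ) (hfb : ∀ᵐ θ ∂μ, f θ ∈ Icc m b)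
    (hL : AEStronglyMeasurable L μ) (hLb : ∀ᵐ θ ∂μ, L θ ∈ Icc c D) (hc : 0 < c) :
    (∫ θ, f θ * L θ * p θ ∂μ) / (∫ θ, L θ * p θ ∂μ) ≤ b ∧
      b - (∫ θ, f θ * L θ * p θ ∂μ) / (∫ θ, L θ * p θ ∂μ)
        ≤ D / c * (b - ∫ θ, f θ * p θ ∂μ) := by
  have h := le_posterior_and_posterior_sub_le (f := fun θ => -f θ) (m := -b) (b := -m)
    hp0 hp hp1 hf.neg (hfb.mono fun θ hθ => ⟨neg_le_neg hθ.2, neg_le_neg hθ.1⟩) hL hLb hc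
  simp only [neg_mul, integral_neg, neg_div] at h
  exact ⟨by linarith [h.1], by linear_combination h.2⟩

end Posterior

/-- Key corollary: with a continuous strictly positive likelihood `L` on the simplex,
vacuous prior expectations of `f` (lower = `inf f`, upper = `sup f`) imply vacuous
posterior expectations of `f` after Bayes updating. -/
theorem stmt_7 (k : ℕ) (hk : 0 < k)
    (μ : Measure (Fin k → ℝ))
    (hsupp : ∀ᵐ θ ∂μ, θ ∈ stdSimplex ℝ (Fin k))
    (M : Set ((Fin k → ℝ) → ℝ))
    (hM : ∀ p ∈ M, (∀ θ, 0 ≤ p θ) ∧ Integrable p μ ∧ ∫ θ, p θ ∂μ = 1)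
    (f : (Fin k → ℝ) → ℝ) (hf : ContinuousOn f (stdSimplex ℝ (Fin k)))
    (L : (Fin k → ℝ) → ℝ) (hL : ContinuousOn L (stdSimplex ℝ (Fin k)))
    (hLpos : ∀ θ ∈ stdSimplex ℝ (Fin k), 0 < L θ)
    (hpriorinf : sInf ((fun p => ∫ θ, f θ * p θ ∂μ) '' M)
        = sInf (f '' stdSimplex ℝ (Fin k)))
    (hpriorsup : sSup ((fun p => ∫ θ, f θ * p θ ∂μ) '' M)
        = sSup (f '' stdSimplex ℝ (Fin k))) :
    sInf ((fun p => (∫ θ, f θ * L θ * p θ ∂μ) / ∫ θ, L θ * p θ ∂μ) '' M)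
        = sInf (f '' stdSimplex ℝ (Fin k)) ∧
    sSup ((fun p => (∫ θ, f θ * L θ * p θ ∂μ) / ∫ θ, L θ * p θ ∂μ) '' M)
        = sSup (f '' stdSimplex ℝ (Fin k)) := by
  set S := stdSimplex ℝ (Fin k)
  have hS : IsCompact S := isCompact_stdSimplex ℝ (Fin k)
  have hSne : S.Nonempty := ⟨_, single_mem_stdSimplex ℝ (⟨0, hk⟩ : Fin k)⟩
  have hμS : μ.restrict S = μ := Measure.restrict_eq_self_of_ae_mem hsupp
  have hfm : AEStronglyMeasurable f μ :=
    hμS ▸ (hf.aemeasurable hS.measurableSet).aestronglyMeasurable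
  have hLm : AEStronglyMeasurable L μ :=
    hμS ▸ (hL.aemeasurable hS.measurableSet).aestronglyMeasurable
  have hfb := hsupp.mono fun θ hθ => hS.mem_Icc_sInf_sSup_image hf hθ
  have hLb := hsupp.mono fun θ hθ => hS.mem_Icc_sInf_sSup_image hL hθ
  have hc : 0 < sInf (L '' S) := by
    obtain ⟨θ, hθ, hθL⟩ := (hS.image_of_continuousOn hL).sInf_mem (hSne.image L)
    exact hθL ▸ hLpos θ hθ
  have hK : 0 < sSup (L '' S) / sInf (L '' S) :=
    have hLS := hS.image_of_continuousOn hL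
    div_pos (hc.trans_le (csInf_le_csSup (hSne.image L) hLS.bddBelow hLS.bddAbove)) hc
  have hlow (p) (hp : p ∈ M) := let ⟨h0, hi, h1⟩ := hM p hp
    le_posterior_and_posterior_sub_le (ae_of_all _ h0) hi h1 hfm hfb hLm hLb hc
  have hupp (p) (hp : p ∈ M) := let ⟨h0, hi, h1⟩ := hM p hp
    posterior_le_and_sub_posterior_le (ae_of_all _ h0) hi h1 hfm hfb hLm hLb hc
  exact ⟨Real.sInf_image_eq_of_sub_le_mul hK (fun p hp => (hlow p hp).1)
      (fun p hp => (hlow p hp).2) hpriorinf,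
    Real.sSup_image_eq_of_sub_le_mul hK (fun p hp => (hupp p hp).1)
      (fun p hp => (hupp p hp).2) hpriorsup⟩
end

section
/- Let M be a set of probability densities on the k-simplex Θ such that the predictive probabilities of a dataset x' ∈ X^{n'} are maximally imprecise a priori, i.e., inf_{p∈M} ∫ ∏_i θ_i^{n_i'} p(θ) dθ = 0 and sup_{p∈M} ∫ ∏_i θ_i^{n_i'} p(θ) dθ = ∏_i (n_i'/n')^{n_i'}, where n' = (n_1',…,n_k') are the frequencies of x'. If the likelihood L(θ) of the observed manifest data is continuous and strictly positive on Θ, then the posterior predictive probabilities are also maximally imprecise: inf_{p∈M} E_p(∏_i θ_i^{n_i'} | L) = 0 and sup_{p∈M} E_p(∏_i θ_i^{n_i'} | L) = ∏_i (n_i'/n')^{n_i'}. -/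
/-!
On the simplex the likelihood satisfies `0 < m ≤ L ≤ B`, so Bayes' rule distorts expectations
of nonnegative functions by at most the factor `B / m`: `E_p(g | L) ≤ (B / m) E_p(g)`. Applied to
`f = ∏ θᵢ ^ nᵢ'` this pushes posterior predictive probabilities to `0` along priors whose prior
predictive probabilities tend to `0`, and applied to `C - f`, where `C = ∏ (nᵢ'/n')^{nᵢ'}` is the
maximum of `f` on the simplex (weighted AM-GM), it pushes them to `C` along priors whose prior
predictive probabilities tend to `C`.
-/

open MeasureTheory Set

open Finset in
theorem prod_div_rpow_le_one {ι : Type*} (s : Finset ι) {w θ : ι → ℝ}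
    (hw : ∀ i ∈ s, 0 ≤ w i) (hw1 : ∑ i ∈ s, w i = 1) (hθ : ∀ i ∈ s, 0 ≤ θ i)
    (hθ1 : ∑ i ∈ s, θ i ≤ 1) :
    ∏ i ∈ s, (θ i / w i) ^ w i ≤ 1 := by
  refine (Real.geom_mean_le_arith_mean_weighted s w _ hw hw1
    fun i hi => div_nonneg (hθ i hi) (hw i hi)).trans ((sum_le_sum fun i hi => ?_).trans hθ1)
  rcases eq_or_ne (w i) 0 with h | h
  · simpa [h] using hθ i hi
  · rw [mul_div_cancel₀ _ h]

theorem prod_pow_le_prod_div_sum_pow {ι : Type*} [Fintype ι] (n : ι → ℕ) {θ : ι → ℝ}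
    (hθ : ∀ i, 0 ≤ θ i) (hθ1 : ∑ i, θ i ≤ 1) :
    ∏ i, θ i ^ n i ≤ ∏ i, ((n i : ℝ) / ↑(∑ j, n j)) ^ n i := by
  set N := ∑ j, n j
  rcases N.eq_zero_or_pos with hN | hN
  · have hn : ∀ i, n i = 0 := by simpa [N, Finset.sum_eq_zero_iff] using hN
    simp [hn]
  have hN' : (N : ℝ) ≠ 0 := by positivity
  set w : ι → ℝ := fun i => n i / N
  have hw : ∀ i, 0 ≤ w i := fun i => by positivity
  have hw1 : ∑ i, w i = 1 := by
    simp only [w, ← Finset.sum_div, N, Nat.cast_sum] at hN' ⊢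
    exact div_self hN'
  have hθw : ∀ i, θ i ^ n i = w i ^ n i * (θ i / w i) ^ n i := fun i => by
    rcases eq_or_ne (n i) 0 with h | h
    · simp [h]
    · rw [← mul_pow, mul_div_cancel₀ _ (div_ne_zero (by exact_mod_cast h) hN')]
  have hpow : ∏ i, (θ i / w i) ^ n i = (∏ i, (θ i / w i) ^ w i) ^ N := by
    rw [← Finset.prod_pow]
    refine Finset.prod_congr rfl fun i _ => ?_
    rw [← Real.rpow_mul_natCast (div_nonneg (hθ i) (hw i)), div_mul_cancel₀ _ hN',
      Real.rpow_natCast]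
  have hle : ∏ i, (θ i / w i) ^ n i ≤ 1 := hpow ▸ pow_le_one₀
    (Finset.prod_nonneg fun i _ => Real.rpow_nonneg (div_nonneg (hθ i) (hw i)) _)
    (prod_div_rpow_le_one _ (fun i _ => hw i) hw1 (fun i _ => hθ i) hθ1)
  calc ∏ i, θ i ^ n i = (∏ i, w i ^ n i) * ∏ i, (θ i / w i) ^ n i := by
        rw [← Finset.prod_mul_distrib]; exact Finset.prod_congr rfl fun i _ => hθw i
    _ ≤ ∏ i, w i ^ n i :=
        mul_le_of_le_one_right (Finset.prod_nonneg fun i _ => pow_nonneg (hw i) _) hle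

section Posterior

variable {Ω : Type*} [MeasurableSpace Ω] {μ : Measure Ω} {L p g : Ω → ℝ} {m B : ℝ}

/-- The posterior expectation `E_p(g | L)` under the prior density `p` and the likelihood `L`. -/
noncomputable def posteriorMean (μ : Measure Ω) (L p g : Ω → ℝ) : ℝ :=
  (∫ θ, g θ * L θ * p θ ∂μ) / ∫ θ, L θ * p θ ∂μ

theorem posteriorMean_nonneg (hg : ∀ᵐ θ ∂μ, 0 ≤ g θ) (hL : ∀ᵐ θ ∂μ, 0 ≤ L θ)
    (hp : ∀ᵐ θ ∂μ, 0 ≤ p θ) : 0 ≤ posteriorMean μ L p g := by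
  refine div_nonneg (integral_nonneg_of_ae ?_) (integral_nonneg_of_ae ?_)
  · filter_upwards [hg, hL, hp] with θ hg hL hp using mul_nonneg (mul_nonneg hg hL) hp
  · filter_upwards [hL, hp] with θ hL hp using mul_nonneg hL hp

theorem integrable_mul_of_ae_bounded {q : Ω → ℝ} (hm : 0 < m) (hLm : ∀ᵐ θ ∂μ, m ≤ L θ)
    (hLB : ∀ᵐ θ ∂μ, L θ ≤ B) (hL : AEStronglyMeasurable L μ) (hq : Integrable q μ) :
    Integrable (fun θ => L θ * q θ) μ :=
  hq.bdd_mul hL (c := B) <| by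
    filter_upwards [hLm, hLB] with θ h1 h2
    rw [Real.norm_eq_abs, abs_of_pos (hm.trans_le h1)]
    exact h2

theorem integrable_mul_mul_of_ae_bounded {q : Ω → ℝ} (hm : 0 < m) (hLm : ∀ᵐ θ ∂μ, m ≤ L θ)
    (hLB : ∀ᵐ θ ∂μ, L θ ≤ B) (hL : AEStronglyMeasurable L μ)
    (hgq : Integrable (fun θ => g θ * q θ) μ) :
    Integrable (fun θ => g θ * L θ * q θ) μ := by
  simpa only [mul_left_comm, mul_assoc] using integrable_mul_of_ae_bounded hm hLm hLB hL hgq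

theorem le_integral_mul_density (hLm : ∀ᵐ θ ∂μ, m ≤ L θ) (hp0 : ∀ᵐ θ ∂μ, 0 ≤ p θ)
    (hp : Integrable p μ) (hp1 : ∫ θ, p θ ∂μ = 1) (hLp : Integrable (fun θ => L θ * p θ) μ) :
    m ≤ ∫ θ, L θ * p θ ∂μ := by
  calc m = ∫ θ, m * p θ ∂μ := by rw [integral_const_mul, hp1, mul_one]
    _ ≤ ∫ θ, L θ * p θ ∂μ := integral_mono_ae (hp.const_mul m) hLp <| by
        filter_upwards [hLm, hp0] with θ h1 h2 using mul_le_mul_of_nonneg_right h1 h2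

theorem posteriorMean_le_mul_integral (hm : 0 < m) (hLm : ∀ᵐ θ ∂μ, m ≤ L θ)
    (hLB : ∀ᵐ θ ∂μ, L θ ≤ B) (hL : AEStronglyMeasurable L μ) (hp0 : ∀ᵐ θ ∂μ, 0 ≤ p θ)
    (hp : Integrable p μ) (hp1 : ∫ θ, p θ ∂μ = 1) (hg : ∀ᵐ θ ∂μ, 0 ≤ g θ)
    (hgp : Integrable (fun θ => g θ * p θ) μ) :
    posteriorMean μ L p g ≤ B / m * ∫ θ, g θ * p θ ∂μ := by
  have hLp := integrable_mul_of_ae_bounded hm hLm hLB hL hp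
  have hgLp := integrable_mul_mul_of_ae_bounded hm hLm hLB hL hgp
  have hZ := le_integral_mul_density hLm hp0 hp hp1 hLp
  have hnum : ∫ θ, g θ * L θ * p θ ∂μ ≤ B * ∫ θ, g θ * p θ ∂μ := by
    rw [← integral_const_mul]
    refine integral_mono_ae hgLp (hgp.const_mul B) ?_
    filter_upwards [hLB, hg, hp0] with θ h1 h2 h3
    calc g θ * L θ * p θ = L θ * (g θ * p θ) := by ring
      _ ≤ B * (g θ * p θ) := mul_le_mul_of_nonneg_right h1 (mul_nonneg h2 h3)
  have hL0 : ∀ᵐ θ ∂μ, 0 ≤ L θ := hLm.mono fun θ h => hm.le.trans h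
  calc posteriorMean μ L p g ≤ (∫ θ, g θ * L θ * p θ ∂μ) / m :=
        div_le_div_of_nonneg_left (integral_nonneg_of_ae <| by
          filter_upwards [hg, hL0, hp0] with θ h1 h2 h3 using mul_nonneg (mul_nonneg h1 h2) h3)
          hm hZ
    _ ≤ B * (∫ θ, g θ * p θ ∂μ) / m := div_le_div_of_nonneg_right hnum hm.le
    _ = B / m * ∫ θ, g θ * p θ ∂μ := by ring

theorem posteriorMean_const_sub (c : ℝ) (hm : 0 < m) (hLm : ∀ᵐ θ ∂μ, m ≤ L θ)
    (hLB : ∀ᵐ θ ∂μ, L θ ≤ B) (hL : AEStronglyMeasurable L μ) (hp0 : ∀ᵐ θ ∂μ, 0 ≤ p θ)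
    (hp : Integrable p μ) (hp1 : ∫ θ, p θ ∂μ = 1) (hgp : Integrable (fun θ => g θ * p θ) μ) :
    posteriorMean μ L p (fun θ => c - g θ) = c - posteriorMean μ L p g := by
  have hLp := integrable_mul_of_ae_bounded hm hLm hLB hL hp
  have hZ := (hm.trans_le (le_integral_mul_density hLm hp0 hp hp1 hLp)).ne'
  have h : ∫ θ, (c - g θ) * L θ * p θ ∂μ = c * ∫ θ, L θ * p θ ∂μ - ∫ θ, g θ * L θ * p θ ∂μ := by
    rw [← integral_const_mul, ← integral_sub (hLp.const_mul c)
      (integrable_mul_mul_of_ae_bounded hm hLm hLB hL hgp)]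
    congr 1 with θ
    ring
  rw [posteriorMean, posteriorMean, h, sub_div, mul_div_cancel_right₀ _ hZ]

theorem posteriorMean_le_of_ae_le {c : ℝ} (hm : 0 < m) (hLm : ∀ᵐ θ ∂μ, m ≤ L θ)
    (hLB : ∀ᵐ θ ∂μ, L θ ≤ B) (hL : AEStronglyMeasurable L μ) (hp0 : ∀ᵐ θ ∂μ, 0 ≤ p θ)
    (hp : Integrable p μ) (hp1 : ∫ θ, p θ ∂μ = 1) (hgp : Integrable (fun θ => g θ * p θ) μ)
    (hgc : ∀ᵐ θ ∂μ, g θ ≤ c) : posteriorMean μ L p g ≤ c := by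
  have := posteriorMean_nonneg (g := fun θ => c - g θ) (hgc.mono fun θ h => sub_nonneg.2 h)
    (hLm.mono fun θ h => hm.le.trans h) hp0
  rwa [posteriorMean_const_sub c hm hLm hLB hL hp0 hp hp1 hgp, sub_nonneg] at this

theorem sub_posteriorMean_le_mul (c : ℝ) (hm : 0 < m) (hLm : ∀ᵐ θ ∂μ, m ≤ L θ)
    (hLB : ∀ᵐ θ ∂μ, L θ ≤ B) (hL : AEStronglyMeasurable L μ) (hp0 : ∀ᵐ θ ∂μ, 0 ≤ p θ)
    (hp : Integrable p μ) (hp1 : ∫ θ, p θ ∂μ = 1) (hgp : Integrable (fun θ => g θ * p θ) μ)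
    (hgc : ∀ᵐ θ ∂μ, g θ ≤ c) :
    c - posteriorMean μ L p g ≤ B / m * (c - ∫ θ, g θ * p θ ∂μ) := by
  have hcgp : Integrable (fun θ => (c - g θ) * p θ) μ :=
    ((hp.const_mul c).sub hgp).congr (ae_of_all _ fun θ => (sub_mul c (g θ) (p θ)).symm)
  have hprior : ∫ θ, (c - g θ) * p θ ∂μ = c - ∫ θ, g θ * p θ ∂μ := by
    simp only [sub_mul]
    rw [integral_sub (hp.const_mul c) hgp, integral_const_mul, hp1, mul_one]
  have h := posteriorMean_le_mul_integral hm hLm hLB hL hp0 hp hp1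
    (hgc.mono fun θ h => sub_nonneg.2 h) hcgp
  rwa [posteriorMean_const_sub c hm hLm hLB hL hp0 hp hp1 hgp, hprior] at h

end Posterior

theorem csInf_image_eq_of_sub_le_mul {α : Type*} {M : Set α} {F G : α → ℝ} {a K : ℝ}
    (hK : 0 < K) (hF : sInf (F '' M) = a) (hGa : ∀ x ∈ M, a ≤ G x)
    (hGF : ∀ x ∈ M, G x - a ≤ K * (F x - a)) : sInf (G '' M) = a := by
  rcases M.eq_empty_or_nonempty with rfl | hM
  · simpa using hF
  refine csInf_eq_of_forall_ge_of_forall_gt_exists_lt (hM.image G) (forall_mem_image.2 hGa)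
    fun w hw => ?_
  have hε : 0 < (w - a) / K := div_pos (sub_pos.2 hw) hK
  obtain ⟨_, ⟨x, hx, rfl⟩, hxw⟩ :=
    exists_lt_of_csInf_lt (hM.image F) (show sInf (F '' M) < a + (w - a) / K by linarith)
  refine ⟨G x, mem_image_of_mem G hx, ?_⟩
  have := mul_lt_mul_of_pos_left (show F x - a < (w - a) / K by linarith) hK
  rw [mul_div_cancel₀ _ hK.ne'] at this
  linarith [hGF x hx]

theorem sInf_image_neg {α : Type*} (M : Set α) (F : α → ℝ) :
    sInf ((fun x => -F x) '' M) = -sSup (F '' M) := by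
  rw [← Real.sInf_neg]
  congr 1
  ext
  simp [neg_eq_iff_eq_neg]

theorem csSup_image_eq_of_sub_le_mul {α : Type*} {M : Set α} {F G : α → ℝ} {a K : ℝ}
    (hK : 0 < K) (hF : sSup (F '' M) = a) (hGa : ∀ x ∈ M, G x ≤ a)
    (hGF : ∀ x ∈ M, a - G x ≤ K * (a - F x)) : sSup (G '' M) = a := by
  have h := csInf_image_eq_of_sub_le_mul (F := fun x => -F x) (G := fun x => -G x) (a := -a) hK
    (by rw [sInf_image_neg, hF]) (fun x hx => neg_le_neg (hGa x hx))
    (fun x hx => by linarith [hGF x hx])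
  rwa [sInf_image_neg, neg_inj] at h

theorem stmt_11_general (k : ℕ) (hk : 0 < k)
    (μ : Measure (Fin k → ℝ))
    (hsupp : ∀ᵐ θ ∂μ, θ ∈ stdSimplex ℝ (Fin k))
    (M : Set ((Fin k → ℝ) → ℝ))
    (hM : ∀ p ∈ M, (∀ θ, 0 ≤ p θ) ∧ Integrable p μ ∧ ∫ θ, p θ ∂μ = 1)
    (n' : Fin k → ℕ) (N : ℕ) (hN : N = ∑ i, n' i)
    (L : (Fin k → ℝ) → ℝ) (hL : ContinuousOn L (stdSimplex ℝ (Fin k)))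
    (hLpos : ∀ θ ∈ stdSimplex ℝ (Fin k), 0 < L θ)
    (hpriorinf : sInf ((fun p => ∫ θ, (∏ i, θ i ^ n' i) * p θ ∂μ) '' M) = 0)
    (hpriorsup : sSup ((fun p => ∫ θ, (∏ i, θ i ^ n' i) * p θ ∂μ) '' M)
        = ∏ i, ((n' i : ℝ) / N) ^ n' i) :
    sInf ((fun p => (∫ θ, (∏ i, θ i ^ n' i) * L θ * p θ ∂μ) /
        ∫ θ, L θ * p θ ∂μ) '' M) = 0 ∧
    sSup ((fun p => (∫ θ, (∏ i, θ i ^ n' i) * L θ * p θ ∂μ) /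
        ∫ θ, L θ * p θ ∂μ) '' M) = ∏ i, ((n' i : ℝ) / N) ^ n' i := by
  subst hN
  set f : (Fin k → ℝ) → ℝ := fun θ => ∏ i, θ i ^ n' i
  set C : ℝ := ∏ i, ((n' i : ℝ) / ↑(∑ i, n' i)) ^ n' i
  have hf0 : ∀ᵐ θ ∂μ, 0 ≤ f θ :=
    hsupp.mono fun θ hθ => Finset.prod_nonneg fun i _ => pow_nonneg (hθ.1 i) _
  have hfC : ∀ᵐ θ ∂μ, f θ ≤ C :=
    hsupp.mono fun θ hθ => prod_pow_le_prod_div_sum_pow n' hθ.1 hθ.2.le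
  have hSne : (stdSimplex ℝ (Fin k)).Nonempty := ⟨_, ite_eq_mem_stdSimplex ℝ (⟨0, hk⟩ : Fin k)⟩
  obtain ⟨θm, hθm, hmin⟩ := (isCompact_stdSimplex ℝ (Fin k)).exists_isMinOn hSne hL
  obtain ⟨θB, hθB, hmax⟩ := (isCompact_stdSimplex ℝ (Fin k)).exists_isMaxOn hSne hL
  have hm : 0 < L θm := hLpos θm hθm
  have hLm : ∀ᵐ θ ∂μ, L θm ≤ L θ := hsupp.mono fun θ hθ => hmin hθ
  have hLB : ∀ᵐ θ ∂μ, L θ ≤ L θB := hsupp.mono fun θ hθ => hmax hθ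
  have hLmeas : AEStronglyMeasurable L μ := by
    have := hL.aestronglyMeasurable (μ := μ) (isClosed_stdSimplex ℝ (Fin k)).measurableSet
    rwa [Measure.restrict_eq_self_of_ae_mem hsupp] at this
  have hK : 0 < L θB / L θm := div_pos (hLpos θB hθB) hm
  have hfp : ∀ p ∈ M, Integrable (fun θ => f θ * p θ) μ := fun p hp =>
    (hM p hp).2.1.bdd_mul (c := C)
      (continuous_finsetProd _ fun i _ => (continuous_apply i).pow _).aestronglyMeasurable
      (by filter_upwards [hf0, hfC] with θ h0 h1 using (Real.norm_of_nonneg h0).trans_le h1)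
  refine ⟨csInf_image_eq_of_sub_le_mul hK hpriorinf (fun p hpM => ?_) (fun p hpM => ?_),
    csSup_image_eq_of_sub_le_mul hK hpriorsup (fun p hpM => ?_) (fun p hpM => ?_)⟩ <;>
    obtain ⟨hp0, hp, hp1⟩ := hM p hpM
  · exact posteriorMean_nonneg hf0 (hLm.mono fun θ h => hm.le.trans h) (ae_of_all _ hp0)
  · rw [sub_zero, sub_zero]
    exact posteriorMean_le_mul_integral hm hLm hLB hLmeas
      (ae_of_all _ hp0) hp hp1 hf0 (hfp p hpM)
  · exact posteriorMean_le_of_ae_le hm hLm hLB hLmeas (ae_of_all _ hp0) hp hp1 (hfp p hpM) hfC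
  · exact sub_posteriorMean_le_mul C hm hLm hLB hLmeas (ae_of_all _ hp0) hp hp1 (hfp p hpM) hfC

/-- If the prior predictive probabilities of a dataset with frequencies `n'` are
maximally imprecise (lower `0`, upper `∏_i (n_i'/n')^{n_i'}`) and the likelihood `L`
of the manifest data is continuous and strictly positive on the simplex, then the
posterior predictive probabilities are also maximally imprecise. -/
theorem stmt_11 (k : ℕ) (hk : 0 < k)
    (μ : Measure (Fin k → ℝ))
    (hsupp : ∀ᵐ θ ∂μ, θ ∈ stdSimplex ℝ (Fin k))
    (M : Set ((Fin k → ℝ) → ℝ))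
    (hM : ∀ p ∈ M, (∀ θ, 0 ≤ p θ) ∧ Integrable p μ ∧ ∫ θ, p θ ∂μ = 1)
    (n' : Fin k → ℕ) (N : ℕ) (hN : N = ∑ i, n' i) (hNpos : 0 < N)
    (L : (Fin k → ℝ) → ℝ) (hL : ContinuousOn L (stdSimplex ℝ (Fin k)))
    (hLpos : ∀ θ ∈ stdSimplex ℝ (Fin k), 0 < L θ)
    (hpriorinf : sInf ((fun p => ∫ θ, (∏ i, θ i ^ n' i) * p θ ∂μ) '' M) = 0)
    (hpriorsup : sSup ((fun p => ∫ θ, (∏ i, θ i ^ n' i) * p θ ∂μ) '' M)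
        = ∏ i, ((n' i : ℝ) / N) ^ n' i) :
    sInf ((fun p => (∫ θ, (∏ i, θ i ^ n' i) * L θ * p θ ∂μ) /
        ∫ θ, L θ * p θ ∂μ) '' M) = 0 ∧
    sSup ((fun p => (∫ θ, (∏ i, θ i ^ n' i) * L θ * p θ ∂μ) /
        ∫ θ, L θ * p θ ∂μ) '' M) = ∏ i, ((n' i : ℝ) / N) ^ n' i :=
  stmt_11_general k hk μ hsupp M hM n' N hN L hL hLpos hpriorinf hpriorsup
end

section
/- In the latent-variable multinomial model with the IDM near-ignorance set of priors M₀ = {dir_{s,t} : t in the open k-simplex} (s > 0 fixed), if all entries of all emission matrices Λ(S_i) are strictly nonzero, then for every observed manifest dataset s and every outcome x_j, the posterior predictive probabilities are vacuous: sup_{t} P_t(X_{n+1} = x_j | s) = 1 and inf_t P_t(X_{n+1} = x_j | s) = 0. -/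
/-!
Each posterior predictive `P_t(X_{n+1} = x_j | s)` is a weighted average of the numbers
`(a_j^x + s t_j)/(n+s) ∈ [0,1]`. At a vertex `e_h` of the simplex the Dirichlet prior degenerates
to the point mass on the constant dataset `x ≡ h`, whose likelihood `∏ i, λ_i(h)` is positive;
so the predictive is continuous at `e_h`, where it equals `1` if `h = j` and `0` otherwise. The
vertices are limits of points of the open simplex, hence `1` and (using some `h ≠ j`, `k ≥ 2`) `0`
are in the closure of the set of predictives.
-/

open Finset Set

/-- Number of occurrences of outcome `j` in the latent dataset `x`. -/
def count {k n : ℕ} (x : Fin n → Fin k) (j : Fin k) : ℕ :=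
  (Finset.univ.filter fun i => x i = j).card

/-- The Dirichlet marginal probability `P_t(x)` of a latent dataset `x`
under the prior `dir_{s,t}`. -/
noncomputable def margP {k n : ℕ} (s : ℝ) (t : Fin k → ℝ) (x : Fin n → Fin k) : ℝ :=
  (∏ h, ∏ l ∈ Finset.range (count x h), (s * t h + (l : ℝ))) /
    ∏ l ∈ Finset.range n, (s + (l : ℝ))

/-- The posterior predictive probability `P_t(X_{n+1} = x_j | s)` under the prior
`dir_{s,t}`, where `Ps x = P(s|x)` is the emission likelihood of the observed
manifest dataset: the convex combination
`Σ_x [P(s|x)P_t(x)/Σ_{x'}P(s|x')P_t(x')] · (a_j^x + s t_j)/(n+s)`. -/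
noncomputable def postPred {k n : ℕ} (s : ℝ) (t : Fin k → ℝ)
    (Ps : (Fin n → Fin k) → ℝ) (j : Fin k) : ℝ :=
  ∑ x : Fin n → Fin k,
    (Ps x * margP s t x / ∑ x' : Fin n → Fin k, Ps x' * margP s t x') *
      (((count x j : ℝ) + s * t j) / ((n : ℝ) + s))

/-- The open `k`-simplex of hyperparameters of the IDM. -/
def openSimplex (k : ℕ) : Set (Fin k → ℝ) := {t | (∀ i, 0 < t i) ∧ ∑ i, t i = 1}

namespace IDM

open Topology

variable {k n : ℕ}

lemma count_le (x : Fin n → Fin k) (j : Fin k) : count x j ≤ n := by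
  simpa [count] using card_filter_le univ fun i => x i = j

lemma count_const (h j : Fin k) : count (fun _ : Fin n => h) j = if h = j then n else 0 := by
  split_ifs with hhj <;> simp [count, hhj]

lemma margP_nonneg {s : ℝ} (hs : 0 ≤ s) {t : Fin k → ℝ} (ht : ∀ i, 0 ≤ t i)
    (x : Fin n → Fin k) : 0 ≤ margP s t x := by
  unfold margP
  refine div_nonneg (prod_nonneg fun h _ => prod_nonneg fun l _ => ?_)
    (prod_nonneg fun l _ => by positivity)
  have := ht h
  positivity

lemma margP_single {s : ℝ} (hs : 0 < s) (h : Fin k) (x : Fin n → Fin k) :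
    margP s (Pi.single h 1) x = if x = fun _ => h then 1 else 0 := by
  unfold margP
  split_ifs with hx
  · subst hx
    rw [div_eq_one_iff_eq (prod_pos fun l _ => by positivity).ne', prod_eq_single h]
    · simp [count_const]
    · intro h' _ hh'
      simp [count_const, Ne.symm hh']
    · simp
  · obtain ⟨i, hi⟩ : ∃ i, x i ≠ h := by
      by_contra! hc
      exact hx (funext hc)
    refine div_eq_zero_iff.2 (Or.inl (prod_eq_zero (mem_univ (x i)) (prod_eq_zero (i := 0) ?_ ?_)))
    · exact mem_range.2 (card_pos.2 ⟨i, by simp⟩)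
    · simp [hi]

/-- The marginal likelihood `P(s) = Σ_x P(s|x) P_t(x)` of the observed manifest data. -/
noncomputable def evidence (s : ℝ) (t : Fin k → ℝ) (Ps : (Fin n → Fin k) → ℝ) : ℝ :=
  ∑ x, Ps x * margP s t x

lemma evidence_single {s : ℝ} (hs : 0 < s) (Ps : (Fin n → Fin k) → ℝ) (h : Fin k) :
    evidence s (Pi.single h 1) Ps = Ps fun _ => h := by
  simp [evidence, margP_single hs]

lemma postPred_single {s : ℝ} (hs : 0 < s) {Ps : (Fin n → Fin k) → ℝ} {h : Fin k}
    (hPs : Ps (fun _ => h) ≠ 0) (j : Fin k) :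
    postPred s (Pi.single h 1) Ps j = if h = j then 1 else 0 := by
  change ∑ x, Ps x * margP s _ x / evidence s _ Ps * _ = _
  have hns : (n : ℝ) + s ≠ 0 := by positivity
  simp only [evidence_single hs, margP_single hs, mul_ite, mul_one, mul_zero, ite_div, zero_div,
    ite_mul, zero_mul, Fintype.sum_ite_eq', div_self hPs, one_mul, count_const, Pi.single_apply]
  by_cases hhj : h = j
  · subst hhj
    simp [div_self hns]
  · simp [hhj, Ne.symm hhj]

lemma sum_div_sum_mul_mem_Icc {ι : Type*} (u : Finset ι) {a v : ι → ℝ} (ha : ∀ i, 0 ≤ a i)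
    (hv : ∀ i, v i ∈ Icc (0 : ℝ) 1) : ∑ i ∈ u, a i / (∑ i' ∈ u, a i') * v i ∈ Icc (0 : ℝ) 1 := by
  have hw : ∀ i, 0 ≤ a i / ∑ i' ∈ u, a i' :=
    fun i => div_nonneg (ha i) (sum_nonneg fun i _ => ha i)
  refine ⟨sum_nonneg fun i _ => mul_nonneg (hw i) (hv i).1, ?_⟩
  calc ∑ i ∈ u, a i / (∑ i' ∈ u, a i') * v i ≤ ∑ i ∈ u, a i / ∑ i' ∈ u, a i' :=
        sum_le_sum fun i _ => mul_le_of_le_one_right (hw i) (hv i).2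
    _ = (∑ i ∈ u, a i) / ∑ i' ∈ u, a i' := (sum_div _ _ _).symm
    _ ≤ 1 := div_self_le_one _

lemma postPred_mem_Icc {s : ℝ} (hs : 0 < s) {Ps : (Fin n → Fin k) → ℝ} (hPs : ∀ x, 0 ≤ Ps x)
    {t : Fin k → ℝ} (ht : t ∈ openSimplex k) (j : Fin k) :
    postPred s t Ps j ∈ Icc (0 : ℝ) 1 := by
  obtain ⟨htpos, htsum⟩ := ht
  have htj : t j ≤ 1 := htsum ▸ single_le_sum (fun i _ => (htpos i).le) (mem_univ j)
  have hw : ∀ x, 0 ≤ Ps x * margP s t x :=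
    fun x => mul_nonneg (hPs x) (margP_nonneg hs.le (fun i => (htpos i).le) x)
  refine sum_div_sum_mul_mem_Icc _ hw fun x => ⟨by have := htpos j; positivity, ?_⟩
  rw [div_le_one (by positivity)]
  have : s * t j ≤ s := mul_le_of_le_one_right hs.le htj
  linarith [(Nat.cast_le (α := ℝ)).2 (count_le x j)]

@[fun_prop]
lemma continuous_margP (s : ℝ) (x : Fin n → Fin k) :
    Continuous fun t : Fin k → ℝ => margP s t x := by
  unfold margP
  fun_prop

lemma continuousAt_postPred {s : ℝ} {Ps : (Fin n → Fin k) → ℝ} {t : Fin k → ℝ}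
    (hZ : evidence s t Ps ≠ 0) (j : Fin k) : ContinuousAt (fun t => postPred s t Ps j) t := by
  have hZc : Continuous fun t => evidence s t Ps := by
    unfold evidence
    fun_prop
  exact tendsto_finsetSum _ fun x _ =>
    ((continuous_const.mul (continuous_margP s x)).continuousAt.div hZc.continuousAt hZ).mul
      ((continuous_const.add (continuous_const.mul (continuous_apply j))).div_const _).continuousAt

/-- The vertex `e_h` is the limit of `(1 - ε) e_h + ε (1/k, …, 1/k)` as `ε → 0⁺`. -/
lemma single_mem_closure_openSimplex (h : Fin k) :
    (Pi.single h 1 : Fin k → ℝ) ∈ closure (openSimplex k) := by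
  have hk : (0 : ℝ) < k := by exact_mod_cast h.pos
  set γ : ℝ → Fin k → ℝ := fun ε i => (1 - ε) * (Pi.single h 1 : Fin k → ℝ) i + ε / k
  have hγ_cont : Continuous γ := by fun_prop
  have hγ_zero : γ 0 = Pi.single h 1 := by simp [γ]
  have hγ_mem : ∀ ε ∈ Ioc (0 : ℝ) 1, γ ε ∈ openSimplex k := by
    rintro ε ⟨hε0, hε1⟩
    refine ⟨fun i => ?_, ?_⟩
    · have : 0 ≤ (Pi.single h 1 : Fin k → ℝ) i := by
        rcases eq_or_ne i h with rfl | hi <;> simp [*]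
      have : 0 ≤ 1 - ε := by linarith
      positivity
    · simp [γ, sum_add_distrib, ← mul_sum]
      field_simp
      ring
  refine mem_closure_of_tendsto (b := 𝓝[>] (0 : ℝ))
    (hγ_zero ▸ (hγ_cont.tendsto 0).mono_left nhdsWithin_le_nhds) ?_
  filter_upwards [Ioc_mem_nhdsGT one_pos] using hγ_mem

lemma postPred_single_mem_closure {s : ℝ} (hs : 0 < s) {Ps : (Fin n → Fin k) → ℝ} {h : Fin k}
    (hPs : Ps (fun _ => h) ≠ 0) (j : Fin k) :
    (if h = j then 1 else 0 : ℝ) ∈ closure ((fun t => postPred s t Ps j) '' openSimplex k) := by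
  rw [← postPred_single hs hPs j]
  have hZ : evidence s (Pi.single h 1) Ps ≠ 0 := by rwa [evidence_single hs]
  exact (continuousAt_postPred hZ j).continuousWithinAt.mem_closure_image
    (single_mem_closure_openSimplex h)

end IDM

open IDM in
/-- IDM with latent variables: if all entries of all emission matrices are strictly
positive (`lam i j = P(S_i = s_i^{obs} | X_i = x_j) > 0`), then for every observed
manifest dataset the posterior predictive probabilities of the next latent outcome
remain vacuous: the upper probability is `1` and the lower probability is `0`. -/
theorem stmt_16 (k n : ℕ) (hk : 2 ≤ k) (s : ℝ) (hs : 0 < s)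
    (lam : Fin n → Fin k → ℝ) (hlam : ∀ i j, 0 < lam i j) :
    ∀ j : Fin k,
      sSup ((fun t => postPred s t (fun x => ∏ i, lam i (x i)) j) '' openSimplex k)
          = 1 ∧
      sInf ((fun t => postPred s t (fun x => ∏ i, lam i (x i)) j) '' openSimplex k)
          = 0 := by
  intro j
  have hPs : ∀ x : Fin n → Fin k, 0 < ∏ i, lam i (x i) :=
    fun x => prod_pos fun i _ => hlam i (x i)
  set S := (fun t => postPred s t (fun x => ∏ i, lam i (x i)) j) '' openSimplex k
  have hS : S ⊆ Icc 0 1 :=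
    image_subset_iff.2 fun t ht => postPred_mem_Icc hs (fun x => (hPs x).le) ht j
  have hvertex : ∀ h, (if h = j then 1 else 0 : ℝ) ∈ closure S :=
    fun h => postPred_single_mem_closure hs (hPs _).ne' j
  have hne : S.Nonempty := closure_nonempty_iff.1 ⟨_, hvertex j⟩
  have : Nontrivial (Fin k) := Fin.nontrivial_iff_two_le.2 hk
  obtain ⟨h, hhj⟩ := exists_ne j
  constructor
  · exact (isLUB_of_mem_closure (fun y hy => (hS hy).2) (by simpa using hvertex j)).csSup_eq hne
  · exact (isGLB_of_mem_closure (fun y hy => (hS hy).1)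
      (by simpa [hhj] using hvertex h)).csInf_eq hne
end

section
/- In the latent-variable multinomial model with the IDM set of priors, sup_t P_t(X_{n+1} = x_j | s) < 1 if and only if the observed manifest data s contains at least one observation S_i = s_h with λ_{hj}(S_i) = 0 (i.e., an observation incompatible with the latent outcome x_j). Equivalently, sup_t P_t(X_{n+1}=x_j|s) = 1 iff P(s | x̄^j) > 0 where x̄^j is the latent dataset consisting of n copies of x_j. -/
open Finset Set

lemma count_le {k n : ℕ} (x : Fin n → Fin k) (j : Fin k) : count x j ≤ n := by
  classical
  calc (Finset.univ.filter fun i => x i = j).card ≤ (Finset.univ : Finset (Fin n)).card :=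
        Finset.card_filter_le _ _
    _ = n := by simp

lemma margP_pos {k n : ℕ} {s : ℝ} (hs : 0 < s) {t : Fin k → ℝ} (ht : ∀ h, 0 < t h)
    (x : Fin n → Fin k) : 0 < margP s t x := by
  unfold margP
  apply div_pos
  · apply Finset.prod_pos
    intro h _
    apply Finset.prod_pos
    intro l _
    have := ht h
    positivity
  · apply Finset.prod_pos
    intro l _
    positivity

lemma margP_cont {k n : ℕ} (s : ℝ) (x : Fin n → Fin k) :
    Continuous fun t : Fin k → ℝ => margP s t x := by
  unfold margP
  apply Continuous.div_const
  apply continuous_finset_prod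
  intro h _
  apply continuous_finset_prod
  intro l _
  exact (continuous_const.mul (continuous_apply h)).add continuous_const

lemma postPred_le {k n : ℕ} {s : ℝ} (hs : 0 < s) {t : Fin k → ℝ} (ht : t ∈ openSimplex k)
    {Ps : (Fin n → Fin k) → ℝ} (hPs : ∀ x, 0 ≤ Ps x) (hex : ∃ x, 0 < Ps x)
    (j : Fin k) {c : ℝ}
    (hc : ∀ x : Fin n → Fin k, Ps x ≠ 0 → ((count x j : ℝ) + s * t j) / ((n : ℝ) + s) ≤ c) :
    postPred s t Ps j ≤ c := by
  obtain ⟨htp, hts⟩ := ht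
  have hm : ∀ x : Fin n → Fin k, 0 < margP s t x := margP_pos hs htp
  have hD : 0 < ∑ x' : Fin n → Fin k, Ps x' * margP s t x' := by
    apply Finset.sum_pos'
    · intro x _; exact mul_nonneg (hPs x) (hm x).le
    · obtain ⟨x, hx⟩ := hex
      exact ⟨x, Finset.mem_univ x, mul_pos hx (hm x)⟩
  unfold postPred
  calc ∑ x : Fin n → Fin k,
        (Ps x * margP s t x / ∑ x' : Fin n → Fin k, Ps x' * margP s t x') *
          (((count x j : ℝ) + s * t j) / ((n : ℝ) + s))
      ≤ ∑ x : Fin n → Fin k,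
        (Ps x * margP s t x / ∑ x' : Fin n → Fin k, Ps x' * margP s t x') * c := by
        apply Finset.sum_le_sum
        intro x _
        by_cases hx : Ps x = 0
        · simp [hx]
        · exact mul_le_mul_of_nonneg_left (hc x hx)
            (div_nonneg (mul_nonneg (hPs x) (hm x).le) hD.le)
    _ = c := by
        rw [← Finset.sum_mul, ← Finset.sum_div, div_self hD.ne']
        ring

lemma count_const {k n : ℕ} (j h : Fin k) :
    count (fun _ : Fin n => j) h = if h = j then n else 0 := by
  unfold count
  by_cases hh : h = j
  · simp [hh]
  · simp [hh, Ne.symm hh]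

lemma margP_vertex_self {k n : ℕ} {s : ℝ} (hs : 0 < s) (j : Fin k) :
    margP s (fun i => if i = j then (1:ℝ) else 0) (fun _ : Fin n => j) = 1 := by
  unfold margP
  have hnum : (∏ h, ∏ l ∈ Finset.range (count (fun _ : Fin n => j) h),
      (s * (if h = j then (1:ℝ) else 0) + (l : ℝ))) = ∏ l ∈ Finset.range n, (s + (l : ℝ)) := by
    rw [Finset.prod_eq_single j]
    · simp [count_const]
    · intro h _ hh
      simp [count_const, hh]
    · simp
  rw [hnum, div_self]
  apply ne_of_gt
  apply Finset.prod_pos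
  intro l _
  positivity

lemma margP_vertex_ne {k n : ℕ} (s : ℝ) (j : Fin k) (x : Fin n → Fin k)
    (hx : x ≠ fun _ => j) :
    margP s (fun i => if i = j then (1:ℝ) else 0) x = 0 := by
  obtain ⟨i0, hi0⟩ : ∃ i, x i ≠ j := by
    by_contra h
    push_neg at h
    exact hx (funext h)
  unfold margP
  rw [div_eq_zero_iff]
  left
  apply Finset.prod_eq_zero (Finset.mem_univ (x i0))
  apply Finset.prod_eq_zero (i := 0)
  · rw [Finset.mem_range]
    apply Finset.card_pos.mpr
    exact ⟨i0, by simp [count]⟩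
  · simp [hi0]

/-- IDM with latent variables: the posterior upper probability of the next latent
outcome `x_j` is smaller than `1` iff some manifest observation is incompatible with
`x_j` (`lam i j = 0`); equivalently, it equals `1` iff `P(s|x̄^j) = ∏_i lam i j > 0`. -/
theorem stmt_17 (k n : ℕ) (hk : 0 < k) (s : ℝ) (hs : 0 < s)
    (lam : Fin n → Fin k → ℝ) (hlam : ∀ i j, 0 ≤ lam i j)
    (hex : ∃ x : Fin n → Fin k, 0 < ∏ i, lam i (x i))
    (j : Fin k) :
    (sSup ((fun t => postPred s t (fun x => ∏ i, lam i (x i)) j) '' openSimplex k) < 1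
      ↔ ∃ i, lam i j = 0) ∧
    (sSup ((fun t => postPred s t (fun x => ∏ i, lam i (x i)) j) '' openSimplex k) = 1
      ↔ 0 < ∏ i, lam i j) := by
  classical
  set Ps : (Fin n → Fin k) → ℝ := fun x => ∏ i, lam i (x i) with hPsdef
  have hPsnn : ∀ x, 0 ≤ Ps x := fun x => Finset.prod_nonneg fun i _ => hlam i (x i)
  have hPsex : ∃ x, 0 < Ps x := hex
  set F : (Fin k → ℝ) → ℝ := fun t => postPred s t Ps j with hFdef
  set S : Set ℝ := F '' openSimplex k with hSdef
  have hkR : (0:ℝ) < (k:ℝ) := Nat.cast_pos.mpr hk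
  -- nonemptiness
  have hne : S.Nonempty := by
    refine ⟨F (fun _ => (k:ℝ)⁻¹), ⟨fun _ => (k:ℝ)⁻¹, ⟨fun i => by positivity, ?_⟩, rfl⟩⟩
    simp [Finset.sum_const, Finset.card_univ]
    field_simp
  -- upper bound 1
  have htj_le : ∀ t ∈ openSimplex k, t j ≤ 1 := by
    intro t ht
    calc t j ≤ ∑ i, t i := Finset.single_le_sum (fun i _ => (ht.1 i).le) (Finset.mem_univ j)
      _ = 1 := ht.2
  have hle1 : ∀ r ∈ S, r ≤ 1 := by
    rintro r ⟨t, ht, rfl⟩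
    apply postPred_le hs ht hPsnn hPsex
    intro x _
    rw [div_le_one (by positivity)]
    have h1 : (count x j : ℝ) ≤ (n : ℝ) := Nat.cast_le.mpr (count_le x j)
    have h2 : s * t j ≤ s := by nlinarith [htj_le t ht]
    linarith
  have hBdd : BddAbove S := ⟨1, fun r hr => hle1 r hr⟩
  by_cases hcase : ∃ i, lam i j = 0
  · -- incompatible observation exists: sup < 1
    obtain ⟨i0, hi0⟩ := hcase
    have hn : 0 < n := lt_of_le_of_lt (Nat.zero_le _) i0.isLt
    have hnR : (1:ℝ) ≤ (n:ℝ) := by exact_mod_cast hn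
    set c0 : ℝ := ((n:ℝ) - 1 + s) / ((n:ℝ) + s) with hc0
    have hc0lt : c0 < 1 := by
      rw [hc0, div_lt_one (by positivity)]
      linarith
    have hsupc : sSup S ≤ c0 := by
      apply csSup_le hne
      rintro r ⟨t, ht, rfl⟩
      apply postPred_le hs ht hPsnn hPsex
      intro x hx
      have hxi0 : x i0 ≠ j := by
        intro h
        apply hx
        apply Finset.prod_eq_zero (Finset.mem_univ i0)
        rw [h]; exact hi0
      have hcnt : count x j ≤ n - 1 := by
        unfold count
        calc (Finset.univ.filter fun i => x i = j).card
            ≤ ((Finset.univ : Finset (Fin n)).erase i0).card := by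
              apply Finset.card_le_card
              intro i hi
              rw [Finset.mem_filter] at hi
              rw [Finset.mem_erase]
              refine ⟨?_, Finset.mem_univ i⟩
              intro h; rw [h] at hi; exact hxi0 hi.2
          _ = n - 1 := by rw [Finset.card_erase_of_mem (Finset.mem_univ i0)]; simp
      have hcntR : (count x j : ℝ) ≤ (n:ℝ) - 1 := by
        have := Nat.cast_le (α := ℝ) |>.mpr hcnt
        rwa [Nat.cast_sub hn, Nat.cast_one] at this
      rw [hc0, div_le_div_iff₀ (by positivity) (by positivity)]
      have h2 : s * t j ≤ s := by nlinarith [htj_le t ht]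
      nlinarith
    have hsup_lt : sSup S < 1 := lt_of_le_of_lt hsupc hc0lt
    have hprod0 : ¬ (0 < ∏ i, lam i j) := by
      rw [Finset.prod_eq_zero (Finset.mem_univ i0) hi0]
      exact lt_irrefl 0
    exact ⟨⟨fun _ => ⟨i0, hi0⟩, fun _ => hsup_lt⟩,
      ⟨fun h => absurd h (ne_of_lt hsup_lt), fun h => absurd h hprod0⟩⟩
  · -- all observations compatible: sup = 1
    push_neg at hcase
    have hlampos : ∀ i, 0 < lam i j := fun i => lt_of_le_of_ne (hlam i j) (Ne.symm (hcase i))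
    have hPcj : 0 < Ps (fun _ => j) := Finset.prod_pos fun i _ => hlampos i
    set e : Fin k → ℝ := fun i => if i = j then (1:ℝ) else 0 with he
    -- rewrite F for continuity
    have hFeq : F = fun t => (∑ x : Fin n → Fin k, Ps x * margP s t x *
        (((count x j : ℝ) + s * t j) / ((n : ℝ) + s))) /
        (∑ x' : Fin n → Fin k, Ps x' * margP s t x') := by
      funext t
      show postPred s t Ps j = _
      unfold postPred
      rw [Finset.sum_div]
      apply Finset.sum_congr rfl
      intro x _
      ring
    have hDe : (∑ x' : Fin n → Fin k, Ps x' * margP s e x') = Ps (fun _ => j) := by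
      rw [Finset.sum_eq_single (fun _ => j)]
      · rw [margP_vertex_self hs, mul_one]
      · intro x _ hx
        rw [margP_vertex_ne s j x hx, mul_zero]
      · intro h; exact absurd (Finset.mem_univ _) h
    have hNume : (∑ x : Fin n → Fin k, Ps x * margP s e x *
        (((count x j : ℝ) + s * e j) / ((n : ℝ) + s))) = Ps (fun _ => j) := by
      rw [Finset.sum_eq_single (fun _ => j)]
      · rw [margP_vertex_self hs, mul_one]
        have hej : e j = 1 := by simp [he]
        have hcj : count (fun _ : Fin n => j) j = n := by rw [count_const]; simp
        rw [hej, hcj, mul_one]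
        rw [div_self (by positivity), mul_one]
      · intro x _ hx
        rw [margP_vertex_ne s j x hx, mul_zero, zero_mul]
      · intro h; exact absurd (Finset.mem_univ _) h
    have hFe : F e = 1 := by
      rw [hFeq]
      beta_reduce
      rw [hNume, hDe, div_self hPcj.ne']
    have hFcont : ContinuousAt F e := by
      rw [hFeq]
      apply ContinuousAt.div
      · apply Continuous.continuousAt
        apply continuous_finset_sum
        intro x _
        exact ((continuous_const.mul (margP_cont s x)).mul
          (((continuous_const.add (continuous_const.mul (continuous_apply j)))).div_const _))
      · apply Continuous.continuousAt
        apply continuous_finset_sum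
        intro x _
        exact continuous_const.mul (margP_cont s x)
      · rw [hDe]; exact hPcj.ne'
    -- path into the simplex
    set tp : ℝ → Fin k → ℝ := fun δ i => if i = j then 1 - ((k:ℝ) - 1) * δ else δ with htp
    have htp0 : tp 0 = e := by
      funext i
      simp [htp, he]
    have htpcont : Continuous tp := by
      apply continuous_pi
      intro i
      by_cases hi : i = j <;> simp [htp, hi] <;> fun_prop
    have htpmem : ∀ δ ∈ Ioo (0:ℝ) (k:ℝ)⁻¹, tp δ ∈ openSimplex k := by
      rintro δ ⟨hδ0, hδ1⟩
      have hkδ : (k:ℝ) * δ < 1 := by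
        have := (mul_lt_mul_iff_right₀ hkR).mpr hδ1
        rwa [mul_inv_cancel₀ hkR.ne'] at this
      constructor
      · intro i
        by_cases hi : i = j
        · simp only [htp, hi, if_pos rfl]
          linarith
        · simp only [htp, if_neg hi]
          exact hδ0
      · have : ∀ i, tp δ i = δ + (if i = j then 1 - (k:ℝ) * δ else 0) := by
          intro i
          by_cases hi : i = j <;> simp [htp, hi] <;> ring
        rw [Finset.sum_congr rfl (fun i _ => this i)]
        rw [Finset.sum_add_distrib, Finset.sum_ite_eq' Finset.univ j (fun _ => 1 - (k:ℝ)*δ)]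
        simp [Finset.sum_const, Finset.card_univ]
    have hg : Filter.Tendsto (F ∘ tp) (nhds 0) (nhds 1) := by
      have h1 : ContinuousAt (F ∘ tp) 0 :=
        ContinuousAt.comp (htp0 ▸ hFcont) (htpcont.continuousAt)
      have h2 : (F ∘ tp) 0 = 1 := by rw [Function.comp_apply, htp0, hFe]
      exact h2 ▸ h1.tendsto
    have hge1 : (1:ℝ) ≤ sSup S := by
      apply le_of_forall_lt
      intro c hc
      have hev2 : ∀ᶠ δ in nhdsWithin 0 (Ioi (0:ℝ)), c < (F ∘ tp) δ :=
        (hg.mono_left nhdsWithin_le_nhds).eventually (eventually_gt_nhds hc)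
      have hev1 : ∀ᶠ δ in nhdsWithin 0 (Ioi (0:ℝ)), δ ∈ Ioo (0:ℝ) (k:ℝ)⁻¹ :=
        Ioo_mem_nhdsGT_of_mem ⟨le_refl 0, by positivity⟩
      obtain ⟨δ, hδ1, hδ2⟩ := (hev1.and hev2).exists
      calc c < F (tp δ) := hδ2
        _ ≤ sSup S := le_csSup hBdd ⟨tp δ, htpmem δ hδ1, rfl⟩
    have hsup1 : sSup S = 1 := le_antisymm (csSup_le hne hle1) hge1
    refine ⟨⟨fun h => absurd hsup1 (ne_of_lt h), fun ⟨i, hi⟩ => absurd hi (hcase i)⟩,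
      ⟨fun _ => Finset.prod_pos fun i _ => hlampos i, fun _ => hsup1⟩⟩
end
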